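/- arXiv:2011.02584 — 10 statements merged into one kernel-verified Lean document; each statement's English description precedes it below -/
import Mathlib

section
/- Let f : ℝⁿ → ℝ be C² on the open ball B(x⁰, Δ̄), let T = [t¹ … tᵏ] ∈ ℝ^{n×k} have full row rank n with max_j ‖tʲ‖ = Δ_T < Δ̄, and let L be a Lipschitz constant for ∇f on B(x⁰, Δ̄). Then ‖(Tᵀ)† δ_f(x⁰;T) − ∇f(x⁰)‖ ≤ (√k/2) · L · ‖(T̂ᵀ)†‖ · Δ_T, where T̂ = T/Δ_T and δ_f(x⁰;T) ∈ ℝᵏ has j-th entry f(x⁰+tʲ) − f(x⁰). -/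
/-!
Since `T` has full row rank, `(T Tᵀ)⁻¹ T` is a left inverse of `Tᵀ`, so the simplex gradient minus
`∇f(x⁰)` is `(Tᵀ)†` applied to the residuals `eⱼ = f(x⁰ + tʲ) - f(x⁰) - ⟪∇f(x⁰), tʲ⟫` of the
linear model. A Lipschitz gradient gives `|eⱼ| ≤ L/2 ‖tʲ‖² ≤ L/2 Δ_T²`, hence `‖e‖ ≤ √k L/2 Δ_T²`,
and rescaling `T` to `T̂ = T/Δ_T` multiplies the pseudoinverse by `Δ_T`.
-/

open Matrix Metric

noncomputable def opNorm {m n : ℕ} (A : Matrix (Fin m) (Fin n) ℝ) : ℝ :=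
  ‖LinearMap.toContinuousLinearMap (Matrix.toEuclideanLin A)‖

open RealInnerProductSpace

theorem Matrix.isUnit_of_rank_eq_card {K ι : Type*} [Field K] [Fintype ι] [DecidableEq ι]
    {A : Matrix ι ι K} (h : A.rank = Fintype.card ι) : IsUnit A := by
  rw [← mulVec_surjective_iff_isUnit]
  have : LinearMap.range A.mulVecLin = ⊤ := Submodule.eq_top_of_finrank_eq <| by
    rw [← rank, h, Module.finrank_fintype_fun_eq_card]
  exact LinearMap.range_eq_top.1 this

theorem Matrix.isUnit_mul_transpose_of_rank_eq_card {K m n : Type*} [Field K] [LinearOrder K]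
    [IsStrictOrderedRing K] [Fintype m] [Fintype n] [DecidableEq m]
    {A : Matrix m n K} (h : A.rank = Fintype.card m) : IsUnit (A * Aᵀ) :=
  isUnit_of_rank_eq_card (by rw [rank_self_mul_transpose, h])

theorem Matrix.inv_smul_mul_transpose_smul_mul_smul {K m n : Type*} [Field K] [Fintype m]
    [Fintype n] [DecidableEq m] {A : Matrix m n K} (hA : IsUnit (A * Aᵀ)) {c : K} (hc : c ≠ 0) :
    ((c • A) * (c • A)ᵀ)⁻¹ * (c • A) = c⁻¹ • ((A * Aᵀ)⁻¹ * A) := by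
  have : Invertible (c * c) := invertibleOfNonzero (mul_ne_zero hc hc)
  have hcA : (c • A) * (c • A)ᵀ = (c * c) • (A * Aᵀ) := by
    rw [transpose_smul, smul_mul, Matrix.mul_smul, smul_smul]
  rw [hcA, Matrix.inv_smul _ _ ((isUnit_iff_isUnit_det _).1 hA), invOf_eq_inv, smul_mul,
    Matrix.mul_smul, smul_smul]
  congr 1
  field_simp

theorem opNorm_smul {m n : ℕ} (c : ℝ) (A : Matrix (Fin m) (Fin n) ℝ) :
    opNorm (c • A) = |c| * opNorm A := by
  simp only [opNorm, map_smul, norm_smul, Real.norm_eq_abs]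

theorem norm_toLp_mulVec_le {m n : ℕ} (A : Matrix (Fin m) (Fin n) ℝ) (v : Fin n → ℝ) :
    ‖WithLp.toLp 2 (A *ᵥ v)‖ ≤ opNorm A * ‖WithLp.toLp 2 v‖ :=
  (LinearMap.toContinuousLinearMap (toEuclideanLin A)).le_opNorm (WithLp.toLp 2 v)

theorem EuclideanSpace.norm_le_sqrt_card_mul {𝕜 ι : Type*} [RCLike 𝕜] [Fintype ι]
    (x : EuclideanSpace 𝕜 ι) {C : ℝ} (h : ∀ i, ‖x i‖ ≤ C) : ‖x‖ ≤ √(Fintype.card ι) * C := by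
  rcases isEmpty_or_nonempty ι with hι | ⟨⟨i⟩⟩
  · simp [Subsingleton.elim x 0]
  have hC : 0 ≤ C := (norm_nonneg _).trans (h i)
  calc ‖x‖ = √(∑ i, ‖x i‖ ^ 2) := EuclideanSpace.norm_eq x
    _ ≤ √(∑ _ : ι, C ^ 2) := by
      gcongr with i
      exact h i
    _ = √(Fintype.card ι) * C := by
      rw [Finset.sum_const, Finset.card_univ, nsmul_eq_mul, Real.sqrt_mul (Nat.cast_nonneg _),
        Real.sqrt_sq hC]

theorem abs_sub_sub_inner_gradient_le {F : Type*} [NormedAddCommGroup F] [InnerProductSpace ℝ F]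
    [CompleteSpace F] {f : F → ℝ} {x v : F} {R L : ℝ} (hf : DifferentiableOn ℝ f (ball x R))
    (hLip : ∀ y ∈ ball x R, ‖gradient f y - gradient f x‖ ≤ L * ‖y - x‖) (hv : ‖v‖ < R) :
    |f (x + v) - f x - ⟪gradient f x, v⟫| ≤ L / 2 * ‖v‖ ^ 2 := by
  have hseg : ∀ s ∈ Set.Icc (0 : ℝ) 1, x + s • v ∈ ball x R := fun s hs => by
    rw [mem_ball_iff_norm, add_sub_cancel_left, norm_smul, Real.norm_of_nonneg hs.1]
    exact (mul_le_of_le_one_left (norm_nonneg v) hs.2).trans_lt hv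
  set φ : ℝ → ℝ := fun s => f (x + s • v) - f x - s * ⟪gradient f x, v⟫
  have hφ : ∀ s ∈ Set.Icc (0 : ℝ) 1,
      HasDerivAt φ ⟪gradient f (x + s • v) - gradient f x, v⟫ s := fun s hs => by
    have hline : HasDerivAt (fun s : ℝ => x + s • v) v s := by
      simpa using ((hasDerivAt_id s).smul_const v).const_add x
    have hgrad := (hf.differentiableAt (isOpen_ball.mem_nhds (hseg s hs))).hasGradientAt
    refine (((hgrad.hasFDerivAt.comp_hasDerivAt s hline).sub_const (f x)).sub
      ((hasDerivAt_id s).mul_const ⟪gradient f x, v⟫)).congr_deriv ?_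
    simp [inner_sub_left]
  have hB : ∀ s, HasDerivAt (fun s => L / 2 * ‖v‖ ^ 2 * s ^ 2) (L * ‖v‖ ^ 2 * s) s := fun s => by
    refine ((hasDerivAt_pow 2 s).const_mul (L / 2 * ‖v‖ ^ 2)).congr_deriv ?_
    push_cast
    ring
  have hbound : ∀ s ∈ Set.Ico (0 : ℝ) 1,
      ‖⟪gradient f (x + s • v) - gradient f x, v⟫‖ ≤ L * ‖v‖ ^ 2 * s := fun s hs => by
    have hLs := hLip _ (hseg s (Set.Ico_subset_Icc_self hs))
    rw [add_sub_cancel_left, norm_smul, Real.norm_of_nonneg hs.1] at hLs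
    calc ‖⟪gradient f (x + s • v) - gradient f x, v⟫‖
        ≤ ‖gradient f (x + s • v) - gradient f x‖ * ‖v‖ := norm_inner_le_norm _ _
      _ ≤ L * (s * ‖v‖) * ‖v‖ := by gcongr
      _ = L * ‖v‖ ^ 2 * s := by ring
  have := image_norm_le_of_norm_deriv_right_le_deriv_boundary
    (fun s hs => (hφ s hs).continuousAt.continuousWithinAt)
    (fun s hs => (hφ s (Set.Ico_subset_Icc_self hs)).hasDerivWithinAt) (by simp [φ]) hB hbound
    (Set.right_mem_Icc.2 zero_le_one)
  simpa [φ] using this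

theorem norm_toLp_mulVec_sub_le_of_mul_transpose_eq_one {n k : ℕ} (M : Matrix (Fin n) (Fin k) ℝ)
    (t : Fin k → EuclideanSpace ℝ (Fin n)) (hM : M * (of fun i j => t j i)ᵀ = 1)
    (δ : Fin k → ℝ) (g : EuclideanSpace ℝ (Fin n)) {ε : ℝ} (hε : ∀ j, |δ j - ⟪g, t j⟫| ≤ ε) :
    ‖WithLp.toLp 2 (M *ᵥ δ) - g‖ ≤ opNorm M * (√k * ε) := by
  set e : Fin k → ℝ := fun j => δ j - ⟪g, t j⟫
  have he : e = δ - (of fun i j => t j i)ᵀ *ᵥ g.ofLp := by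
    ext j
    simp [e, mulVec, dotProduct, PiLp.inner_apply, mul_comm]
  have hMe : WithLp.toLp 2 (M *ᵥ δ) - g = WithLp.toLp 2 (M *ᵥ e) := by
    rw [he, mulVec_sub, mulVec_mulVec, hM, one_mulVec, WithLp.toLp_sub, WithLp.toLp_ofLp]
  calc ‖WithLp.toLp 2 (M *ᵥ δ) - g‖ = ‖WithLp.toLp 2 (M *ᵥ e)‖ := by rw [hMe]
    _ ≤ opNorm M * ‖WithLp.toLp 2 e‖ := norm_toLp_mulVec_le M e
    _ ≤ opNorm M * (√k * ε) := by
      gcongr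
      · exact norm_nonneg _
      · simpa using EuclideanSpace.norm_le_sqrt_card_mul (WithLp.toLp 2 e) hε

/-- With `T` of full row rank, `(Tᵀ)† = (T Tᵀ)⁻¹ T`. -/
theorem generalized_simplex_gradient_error_bound {n k : ℕ}
    (f : EuclideanSpace ℝ (Fin n) → ℝ) (x0 : EuclideanSpace ℝ (Fin n))
    (Δbar ΔT L : ℝ)
    (t : Fin k → EuclideanSpace ℝ (Fin n))
    (T : Matrix (Fin n) (Fin k) ℝ) (hTdef : T = Matrix.of fun i j => t j i)
    (hrank : T.rank = n)
    (hΔT : IsGreatest (Set.range fun j => ‖t j‖) ΔT)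
    (hΔTbar : ΔT < Δbar)
    (hf : ContDiffOn ℝ 2 f (ball x0 Δbar))
    (hLip : ∀ y ∈ ball x0 Δbar, ∀ z ∈ ball x0 Δbar,
      ‖gradient f y - gradient f z‖ ≤ L * ‖y - z‖) :
    ‖(WithLp.equiv 2 (Fin n → ℝ)).symm
        (((T * Tᵀ)⁻¹ * T).mulVec fun j => f (x0 + t j) - f x0)
      - gradient f x0‖
      ≤ Real.sqrt k / 2 * L *
        opNorm (((ΔT⁻¹ • T) * (ΔT⁻¹ • T)ᵀ)⁻¹ * (ΔT⁻¹ • T)) * ΔT := by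
  obtain ⟨⟨j0, hj0 : ‖t j0‖ = ΔT⟩, hΔT_ub⟩ := hΔT
  have ht : ∀ j, ‖t j‖ ≤ ΔT := fun j => hΔT_ub ⟨j, rfl⟩
  rcases (hj0 ▸ norm_nonneg (t j0) : 0 ≤ ΔT).eq_or_lt with hΔ0 | hΔpos
  · have hT0 : T = 0 := by
      ext i j
      simp [hTdef, norm_le_zero_iff.1 (hΔ0 ▸ ht j)]
    obtain rfl : n = 0 := by rw [← hrank, hT0, rank_zero]
    simp [← hΔ0, Subsingleton.elim (_ : EuclideanSpace ℝ (Fin 0)) 0]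
  have hx0 : x0 ∈ ball x0 Δbar := mem_ball_self (hΔpos.trans hΔTbar)
  have hL : 0 ≤ L := by
    have hmem : x0 + t j0 ∈ ball x0 Δbar := by
      rwa [mem_ball_iff_norm, add_sub_cancel_left, hj0]
    have := (norm_nonneg _).trans (hLip _ hmem _ hx0)
    rw [add_sub_cancel_left, hj0] at this
    exact nonneg_of_mul_nonneg_left this hΔpos
  have htaylor : ∀ j, |f (x0 + t j) - f x0 - ⟪gradient f x0, t j⟫| ≤ L / 2 * ΔT ^ 2 :=
    fun j => (abs_sub_sub_inner_gradient_le (hf.differentiableOn (by norm_num))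
      (fun y hy => hLip y hy x0 hx0) ((ht j).trans_lt hΔTbar)).trans (by gcongr; exact ht j)
  have hunit : IsUnit (T * Tᵀ) :=
    isUnit_mul_transpose_of_rank_eq_card (by rw [hrank, Fintype.card_fin])
  have hinv : (T * Tᵀ)⁻¹ * T * Tᵀ = 1 := by
    rw [Matrix.mul_assoc, nonsing_inv_mul _ ((isUnit_iff_isUnit_det _).1 hunit)]
  rw [inv_smul_mul_transpose_smul_mul_smul hunit (inv_ne_zero hΔpos.ne'), inv_inv, opNorm_smul,
    abs_of_pos hΔpos, WithLp.equiv_symm_apply]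
  calc _ ≤ opNorm ((T * Tᵀ)⁻¹ * T) * (√k * (L / 2 * ΔT ^ 2)) :=
        norm_toLp_mulVec_sub_le_of_mul_transpose_eq_one _ t (hTdef ▸ hinv) _ _ htaylor
    _ = _ := by ring
end

section
/- Let x⁰ ∈ ℝⁿ, let S = [s¹ … sⁿ] ∈ ℝ^{n×n}, and for k ∈ {1,…,n} define U_k ∈ ℝ^{n×n} with columns sⁱ − sᵏ for i ≠ k and −sᵏ in the k-th position. Then the set 𝒮(x⁰;S,U_k) of all points of the form x⁰ + sⁱ, x⁰ + uʲ, and x⁰ + sⁱ + uʲ (together with x⁰) used in the nested-set Hessian computation contains at most (n+1)(n+2)/2 distinct points. -/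
/-- the set of evaluation points for the nested-set Hessian over
S and U_k (k ∈ {1,…,n}) contains at most (n+1)(n+2)/2 distinct points. -/
theorem nshc_points_card_le {n : ℕ}
    (x0 : Fin n → ℝ) (s : Fin n → (Fin n → ℝ)) (k : Fin n)
    (u : Fin n → (Fin n → ℝ))
    (hu : ∀ i, u i = if i = k then -s k else s i - s k) :
    (({x0} ∪ {y | ∃ i, y = x0 + s i} ∪ {y | ∃ j, y = x0 + u j}
        ∪ {y | ∃ i j, y = x0 + s i + u j} : Set (Fin n → ℝ))).ncard
      ≤ (n + 1) * (n + 2) / 2 := by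
  classical
  set v : Fin (n + 1) → (Fin n → ℝ) := Fin.cons 0 s with hv
  set g : Sym2 (Fin (n + 1)) → (Fin n → ℝ) :=
    Sym2.lift ⟨fun a b => x0 - s k + v a + v b, fun a b => by ring⟩ with hg
  have hgab : ∀ a b, g s(a, b) = x0 - s k + v a + v b := fun a b => rfl
  have hsub : ({x0} ∪ {y | ∃ i, y = x0 + s i} ∪ {y | ∃ j, y = x0 + u j}
        ∪ {y | ∃ i j, y = x0 + s i + u j} : Set (Fin n → ℝ)) ⊆ Set.range g := by
    rintro y (((rfl | ⟨i, rfl⟩) | ⟨j, rfl⟩) | ⟨i, j, rfl⟩)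
    · exact ⟨s(k.succ, 0), by simp [hgab, hv] <;> ring⟩
    · exact ⟨s(i.succ, k.succ), by simp [hgab, hv] <;> ring⟩
    · rcases eq_or_ne j k with rfl | hjk
      · exact ⟨s(0, 0), by simp [hgab, hv, hu j] <;> ring⟩
      · exact ⟨s(j.succ, 0), by simp [hgab, hv, hu j, hjk] <;> ring⟩
    · rcases eq_or_ne j k with rfl | hjk
      · exact ⟨s(i.succ, 0), by simp [hgab, hv, hu j] <;> ring⟩
      · exact ⟨s(i.succ, j.succ), by simp [hgab, hv, hu j, hjk] <;> ring⟩
  calc ( ({x0} ∪ {y | ∃ i, y = x0 + s i} ∪ {y | ∃ j, y = x0 + u j}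
        ∪ {y | ∃ i j, y = x0 + s i + u j} : Set (Fin n → ℝ))).ncard
      ≤ (Set.range g).ncard := Set.ncard_le_ncard hsub (Set.finite_range g)
    _ ≤ Fintype.card (Sym2 (Fin (n + 1))) := by
        rw [← Nat.card_coe_set_eq, Nat.card_eq_fintype_card]
        exact Fintype.card_range_le g
    _ = (n + 1) * (n + 2) / 2 := by
        rw [Sym2.card, Fintype.card_fin, Nat.choose_two_right]
        simp [Nat.mul_comm]
end

section
/- Let x⁰ ∈ ℝⁿ, let S = [s¹ … sⁿ] ∈ ℝ^{n×n} have full rank, and fix k ∈ {1,…,n} with U_k having columns sⁱ − sᵏ (i ≠ k) and −sᵏ (i = k). Then the set {x⁰} ∪ {x⁰+sⁱ}ᵢ ∪ {x⁰−sᵏ} ∪ {x⁰+sⁱ−sᵏ}_{i≠k} ∪ {x⁰+sⁱ+sʲ−sᵏ}_{i≤j, i,j≠k, with 2sⁱ−sᵏ when i=j} contains exactly (n+1)(n+2)/2 distinct points. -/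
lemma nshc_single_sum {n : ℕ} (i : Fin n) :
    ∑ x, (Pi.single i 1 : Fin n → ℝ) x = 1 := by
  simp [Finset.sum_pi_single']

lemma nshc_single_inj {n : ℕ} {a b : Fin n}
    (h : (Pi.single a 1 : Fin n → ℝ) = Pi.single b 1) : a = b := by
  by_contra hne
  have := congrFun h a
  simp [Pi.single_apply, hne] at this

lemma nshc_pair_inj {n : ℕ} {a b c d : Fin n}
    (h : (Pi.single a 1 : Fin n → ℝ) + Pi.single b 1 = Pi.single c 1 + Pi.single d 1) :
    (a = c ∧ b = d) ∨ (a = d ∧ b = c) := by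
  by_cases hac : a = c
  · subst hac
    have hbd : (Pi.single b 1 : Fin n → ℝ) = Pi.single d 1 := add_left_cancel h
    exact Or.inl ⟨rfl, nshc_single_inj hbd⟩
  · have ha := congrFun h a
    simp [Pi.single_apply, hac] at ha
    have had : a = d := by
      by_contra hne
      simp [hne] at ha
      split_ifs at ha <;> norm_num at ha
    subst had
    have hbc : (Pi.single b 1 : Fin n → ℝ) = Pi.single c 1 := by
      have h' : (Pi.single b 1 : Fin n → ℝ) + Pi.single a 1
          = Pi.single c 1 + Pi.single a 1 := by
        rw [add_comm] at h; exact h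
      exact add_right_cancel h'
    exact Or.inr ⟨rfl, nshc_single_inj hbc⟩

/-- auxiliary: `v i = e i` for `i ≠ k`, `v k = 0`. -/
noncomputable def nshcV {n : ℕ} (k i : Fin n) : Fin n → ℝ :=
  if i = k then 0 else Pi.single i 1

/-- coefficient vectors of the nested-set Hessian points, indexed by
unordered pairs of `Option (Fin n)`. -/
noncomputable def nshcF {n : ℕ} (k : Fin n) :
    Option (Fin n) → Option (Fin n) → (Fin n → ℝ)
  | none, none => 0
  | none, some i => Pi.single i 1
  | some i, none => Pi.single i 1
  | some i, some j => nshcV k i + nshcV k j - Pi.single k 1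

lemma nshcF_symm {n : ℕ} (k : Fin n) (a b : Option (Fin n)) :
    nshcF k a b = nshcF k b a := by
  rcases a with _ | i <;> rcases b with _ | j <;> simp [nshcF, add_comm]

lemma nshcV_apply_k {n : ℕ} (k i : Fin n) : nshcV k i k = 0 := by
  unfold nshcV
  by_cases h : i = k
  · simp [h]
  · simp [h, Pi.single_apply, fun hh : k = i => h hh.symm]

lemma nshcV_sum {n : ℕ} (k i : Fin n) :
    ∑ x, nshcV k i x = if i = k then 0 else 1 := by
  unfold nshcV
  by_cases h : i = k <;> simp [h, Finset.sum_pi_single']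

lemma nshcF_ss_apply_k {n : ℕ} (k a b : Fin n) :
    nshcF k (some a) (some b) k = -1 := by
  simp [nshcF, nshcV_apply_k, Pi.single_apply]

lemma single_apply_k_mem {n : ℕ} (i k : Fin n) :
    (Pi.single i 1 : Fin n → ℝ) k = 0 ∨ (Pi.single i 1 : Fin n → ℝ) k = 1 := by
  rw [Pi.single_apply]; split_ifs <;> simp

lemma nshcV_pair_inj {n : ℕ} {k a b c d : Fin n}
    (h : nshcV k a + nshcV k b = nshcV k c + nshcV k d) :
    (a = c ∧ b = d) ∨ (a = d ∧ b = c) := by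
  have hsum : ((if a = k then (0:ℝ) else 1) + (if b = k then 0 else 1))
      = ((if c = k then (0:ℝ) else 1) + (if d = k then 0 else 1)) := by
    have := congrArg (fun f : Fin n → ℝ => ∑ x, f x) h
    simpa [Finset.sum_add_distrib, nshcV_sum] using this
  by_cases ha : a = k <;> by_cases hb : b = k <;>
    by_cases hc : c = k <;> by_cases hd : d = k
  all_goals try (norm_num [ha, hb, hc, hd] at hsum; done)
  all_goals simp only [nshcV, ha, hb, hc, hd, if_true, if_false, ite_true, ite_false,
    zero_add, add_zero, if_pos, if_neg, not_false_iff] at h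
  · exact Or.inl ⟨ha.trans hc.symm, hb.trans hd.symm⟩
  · exact Or.inl ⟨ha.trans hc.symm, nshc_single_inj h⟩
  · exact Or.inr ⟨ha.trans hd.symm, nshc_single_inj h⟩
  · exact Or.inr ⟨nshc_single_inj h, hb.trans hc.symm⟩
  · exact Or.inl ⟨nshc_single_inj h, hb.trans hd.symm⟩
  · exact nshc_pair_inj h

lemma nshcSS_apply_k {n : ℕ} (k c d : Fin n) :
    (nshcV k c + nshcV k d - (Pi.single k 1 : Fin n → ℝ)) k = -1 := by
  simp [nshcV_apply_k, Pi.single_apply]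

lemma nshcK_inj {n : ℕ} (k : Fin n) :
    Function.Injective (Sym2.lift ⟨nshcF k, nshcF_symm k⟩) := by
  intro z w
  induction z using Sym2.ind with | _ a b => ?_
  induction w using Sym2.ind with | _ c d => ?_
  intro h
  simp only [Sym2.lift_mk] at h
  rcases a with _ | a <;> rcases b with _ | b <;>
    rcases c with _ | c <;> rcases d with _ | d <;>
    simp only [nshcF] at h <;> rw [Sym2.eq_iff]
  -- nnnn
  · exact Or.inl ⟨rfl, rfl⟩
  -- nnns
  · exfalso; have h1 := congrFun h d; simp [Pi.single_apply] at h1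
  -- nnsn
  · exfalso; have h1 := congrFun h c; simp [Pi.single_apply] at h1
  -- nnss
  · exfalso; have h1 := congrFun h k; rw [nshcSS_apply_k] at h1; norm_num at h1
  -- nsnn
  · exfalso; have h1 := congrFun h b; simp [Pi.single_apply] at h1
  -- nsns
  · exact Or.inl ⟨rfl, congrArg some (nshc_single_inj h)⟩
  -- nssn
  · exact Or.inr ⟨rfl, congrArg some (nshc_single_inj h)⟩
  -- nsss
  · exfalso; have h1 := congrFun h k; rw [nshcSS_apply_k] at h1
    rcases single_apply_k_mem b k with h2 | h2 <;> rw [h2] at h1 <;> norm_num at h1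
  -- snnn
  · exfalso; have h1 := congrFun h a; simp [Pi.single_apply] at h1
  -- snns
  · exact Or.inr ⟨congrArg some (nshc_single_inj h), rfl⟩
  -- snsn
  · exact Or.inl ⟨congrArg some (nshc_single_inj h), rfl⟩
  -- snss
  · exfalso; have h1 := congrFun h k; rw [nshcSS_apply_k] at h1
    rcases single_apply_k_mem a k with h2 | h2 <;> rw [h2] at h1 <;> norm_num at h1
  -- ssnn
  · exfalso; have h1 := congrFun h k; rw [nshcSS_apply_k] at h1; norm_num at h1
  -- ssns
  · exfalso; have h1 := congrFun h k; rw [nshcSS_apply_k] at h1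
    rcases single_apply_k_mem d k with h2 | h2 <;> rw [h2] at h1 <;> norm_num at h1
  -- sssn
  · exfalso; have h1 := congrFun h k; rw [nshcSS_apply_k] at h1
    rcases single_apply_k_mem c k with h2 | h2 <;> rw [h2] at h1 <;> norm_num at h1
  -- ssss
  · have h' : nshcV k a + nshcV k b = nshcV k c + nshcV k d := by
      have := sub_left_injective (G := Fin n → ℝ) (b := (Pi.single k 1 : Fin n → ℝ)) h
      exact this
    rcases nshcV_pair_inj h' with ⟨h1, h2⟩ | ⟨h1, h2⟩
    · exact Or.inl ⟨congrArg some h1, congrArg some h2⟩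
    · exact Or.inr ⟨congrArg some h1, congrArg some h2⟩


lemma nshc_sum_single {n : ℕ} (s : Fin n → Fin n → ℝ) (i : Fin n) :
    ∑ j, (Pi.single i 1 : Fin n → ℝ) j • s j = s i := by
  simp [Pi.single_apply, ite_smul]

lemma nshc_sum_V {n : ℕ} (s : Fin n → Fin n → ℝ) {k i : Fin n} (hi : i ≠ k) :
    ∑ j, nshcV k i j • s j = s i := by
  simp [nshcV, hi, nshc_sum_single]

lemma nshc_sum_Vk {n : ℕ} (s : Fin n → Fin n → ℝ) (k : Fin n) :
    ∑ j, nshcV k k j • s j = 0 := by simp [nshcV]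


lemma nshcL_nn {n : ℕ} (x0 : Fin n → ℝ) (s : Fin n → Fin n → ℝ) (k : Fin n) :
    (x0 + ∑ j, (nshcF k none none) j • s j) = x0 := by simp [nshcF]

lemma nshcL_ns {n : ℕ} (x0 : Fin n → ℝ) (s : Fin n → Fin n → ℝ) (k i : Fin n) :
    (x0 + ∑ j, (nshcF k none (some i)) j • s j) = x0 + s i := by
  simp [nshcF, nshc_sum_single]

lemma nshcL_ss {n : ℕ} (x0 : Fin n → ℝ) (s : Fin n → Fin n → ℝ) {k i j : Fin n}
    (hi : i ≠ k) (hj : j ≠ k) :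
    (x0 + ∑ m, (nshcF k (some i) (some j)) m • s m) = x0 + s i + s j - s k := by
  simp only [nshcF, Pi.add_apply, Pi.sub_apply, add_smul, sub_smul,
    Finset.sum_add_distrib, Finset.sum_sub_distrib, nshc_sum_V s hi,
    nshc_sum_V s hj, nshc_sum_single]
  abel

lemma nshcL_kk {n : ℕ} (x0 : Fin n → ℝ) (s : Fin n → Fin n → ℝ) (k : Fin n) :
    (x0 + ∑ m, (nshcF k (some k) (some k)) m • s m) = x0 - s k := by
  simp only [nshcF, Pi.add_apply, Pi.sub_apply, add_smul, sub_smul,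
    Finset.sum_add_distrib, Finset.sum_sub_distrib, nshc_sum_Vk, nshc_sum_single]
  abel

lemma nshcL_ki {n : ℕ} (x0 : Fin n → ℝ) (s : Fin n → Fin n → ℝ) {k i : Fin n}
    (hi : i ≠ k) :
    (x0 + ∑ m, (nshcF k (some k) (some i)) m • s m) = x0 + s i - s k := by
  simp only [nshcF, Pi.add_apply, Pi.sub_apply, add_smul, sub_smul,
    Finset.sum_add_distrib, Finset.sum_sub_distrib, nshc_sum_Vk,
    nshc_sum_V s hi, nshc_sum_single]
  abel

lemma nshcL_ik {n : ℕ} (x0 : Fin n → ℝ) (s : Fin n → Fin n → ℝ) {k i : Fin n}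
    (hi : i ≠ k) :
    (x0 + ∑ m, (nshcF k (some i) (some k)) m • s m) = x0 + s i - s k := by
  simp only [nshcF, Pi.add_apply, Pi.sub_apply, add_smul, sub_smul,
    Finset.sum_add_distrib, Finset.sum_sub_distrib, nshc_sum_Vk,
    nshc_sum_V s hi, nshc_sum_single]
  abel

lemma nshcL_sn {n : ℕ} (x0 : Fin n → ℝ) (s : Fin n → Fin n → ℝ) (k i : Fin n) :
    (x0 + ∑ j, (nshcF k (some i) none) j • s j) = x0 + s i := by
  simp [nshcF, nshc_sum_single]

/-- if S has full rank (columns linearly independent) and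
k ∈ {1,…,n}, then the evaluation-point set for the nested-set Hessian over S
and U_k has exactly (n+1)(n+2)/2 distinct points.  The pairs set
{x⁰+sⁱ+sʲ−sᵏ}_{i≤j, i,j≠k} (which gives x⁰+2sⁱ−sᵏ when i = j) is recorded
with unordered indices i, j ≠ k. -/
theorem nshc_points_card_Uk_eq {n : ℕ}
    (x0 : Fin n → ℝ) (s : Fin n → (Fin n → ℝ)) (k : Fin n)
    (hs : LinearIndependent ℝ s) :
    (({x0} ∪ {y | ∃ i, y = x0 + s i} ∪ {x0 - s k}
        ∪ {y | ∃ i, i ≠ k ∧ y = x0 + s i - s k}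
        ∪ {y | ∃ i j, i ≠ k ∧ j ≠ k ∧ y = x0 + s i + s j - s k} :
        Set (Fin n → ℝ))).ncard
      = (n + 1) * (n + 2) / 2 := by
  classical
  set K : Sym2 (Option (Fin n)) → (Fin n → ℝ) := Sym2.lift ⟨nshcF k, nshcF_symm k⟩
    with hKdef
  set G : Sym2 (Option (Fin n)) → (Fin n → ℝ) := fun z => x0 + ∑ j, K z j • s j
    with hGdef
  have hLinj : ∀ c d : Fin n → ℝ,
      (x0 + ∑ j, c j • s j) = (x0 + ∑ j, d j • s j) → c = d := by
    intro c d hcd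
    have h1 : ∑ j, c j • s j = ∑ j, d j • s j := add_left_cancel hcd
    have h2 : ∑ j, (c j - d j) • s j = 0 := by
      simp [sub_smul, Finset.sum_sub_distrib, h1]
    have h3 := Fintype.linearIndependent_iff.mp hs (fun j => c j - d j) h2
    funext j
    have h4 : c j - d j = 0 := h3 j
    linarith
  have hGinj : Function.Injective G := by
    intro z w h
    exact nshcK_inj k (hLinj _ _ h)
  have hset : ({x0} ∪ {y | ∃ i, y = x0 + s i} ∪ {x0 - s k}
        ∪ {y | ∃ i, i ≠ k ∧ y = x0 + s i - s k}
        ∪ {y | ∃ i j, i ≠ k ∧ j ≠ k ∧ y = x0 + s i + s j - s k} :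
        Set (Fin n → ℝ)) = Set.range G := by
    ext y
    simp only [Set.mem_union, Set.mem_singleton_iff, Set.mem_setOf_eq, Set.mem_range]
    constructor
    · rintro ((((hy | ⟨i, hy⟩) | hy) | ⟨i, hi, hy⟩) | ⟨i, j, hi, hj, hy⟩)
      · exact ⟨s(none, none), (nshcL_nn x0 s k).trans hy.symm⟩
      · exact ⟨s(none, some i), (nshcL_ns x0 s k i).trans hy.symm⟩
      · exact ⟨s(some k, some k), (nshcL_kk x0 s k).trans hy.symm⟩
      · exact ⟨s(some k, some i), (nshcL_ki x0 s hi).trans hy.symm⟩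
      · exact ⟨s(some i, some j), (nshcL_ss x0 s hi hj).trans hy.symm⟩
    · rintro ⟨z, rfl⟩
      induction z using Sym2.ind with | _ a b => ?_
      rcases a with _ | a <;> rcases b with _ | b
      · exact Or.inl (Or.inl (Or.inl (Or.inl (nshcL_nn x0 s k))))
      · exact Or.inl (Or.inl (Or.inl (Or.inr ⟨b, nshcL_ns x0 s k b⟩)))
      · exact Or.inl (Or.inl (Or.inl (Or.inr ⟨a, nshcL_sn x0 s k a⟩)))
      · by_cases hak : a = k <;> by_cases hbk : b = k
        · exact Or.inl (Or.inl (Or.inr (by rw [hak, hbk]; exact nshcL_kk x0 s k)))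
        · exact Or.inl (Or.inr ⟨b, hbk, by rw [hak]; exact nshcL_ki x0 s hbk⟩)
        · exact Or.inl (Or.inr ⟨a, hak, by rw [hbk]; exact nshcL_ik x0 s hak⟩)
        · exact Or.inr ⟨a, b, hak, hbk, nshcL_ss x0 s hak hbk⟩
  rw [hset, ← Set.image_univ, Set.ncard_image_of_injective _ hGinj, Set.ncard_univ,
    Nat.card_eq_fintype_card, Sym2.card]
  simp only [Fintype.card_option, Fintype.card_fin]
  rw [Nat.choose_two_right]
  congr 1
  · simp [Nat.add_sub_cancel]; ring
end

section
/- Let S, T ∈ ℝ^{n×n}, N ∈ ℝ^{n×n} invertible, and P₁, P₂ ∈ ℝ^{n×n} permutation matrices. Set S̄ = NSP₁ and T̄ = NTP₂. Then 𝒮(x⁰;S,T) is a minimal poised set for nested-set Hessian computation at x⁰ (i.e., S and T are full rank and 𝒮(x⁰;S,T) has exactly (n+1)(n+2)/2 distinct points) if and only if 𝒮(x⁰;S̄,T̄) is a minimal poised set for nested-set Hessian computation at x⁰. -/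
open Matrix

/-- The set of distinct points used in the nested-set Hessian computation:
x⁰, x⁰+sⁱ, x⁰+tʲ, x⁰+sⁱ+tʲ for the columns sⁱ of S and tʲ of T. -/
def nshcSet {n : ℕ} (x0 : Fin n → ℝ) (S T : Matrix (Fin n) (Fin n) ℝ) :
    Set (Fin n → ℝ) :=
  {x0} ∪ {y | ∃ i, y = x0 + fun r => S r i} ∪ {y | ∃ j, y = x0 + fun r => T r j}
    ∪ {y | ∃ i j, y = (x0 + fun r => S r i) + fun r => T r j}

/-- S(x⁰;S,T) is a minimal poised set for nested-set Hessian computation: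
S and T are full rank and the evaluation set has exactly (n+1)(n+2)/2 points. -/
def IsMinimalPoisedNSHC {n : ℕ} (x0 : Fin n → ℝ)
    (S T : Matrix (Fin n) (Fin n) ℝ) : Prop :=
  IsUnit S.det ∧ IsUnit T.det ∧ (nshcSet x0 S T).ncard = (n + 1) * (n + 2) / 2

/-- A permutation matrix. -/
def IsPermMatrix {n : ℕ} (P : Matrix (Fin n) (Fin n) ℝ) : Prop :=
  ∃ σ : Equiv.Perm (Fin n), P = Matrix.of fun i j => if σ j = i then (1 : ℝ) else 0


/-!
Translating by `-x⁰`, the point set is `({0} ∪ cols S) + ({0} ∪ cols T)`. Right multiplication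
by a permutation matrix only reorders the columns, so it leaves this set unchanged, and left
multiplication by `N` maps it through the injective linear map `v ↦ N v`, so its cardinality is
preserved. The full-rank conditions are preserved because `det N` and `det P` are units.
-/

open Pointwise

lemma Matrix.col_mul {l m n R : Type*} [Fintype m] [Fintype n] [DecidableEq n] [Semiring R]
    (N : Matrix l m R) (M : Matrix m n R) (j : n) : (N * M).col j = N *ᵥ M.col j := by
  rw [← mulVec_single_one, ← mulVec_mulVec, mulVec_single_one]

lemma Matrix.range_col_mul {l m n R : Type*} [Fintype m] [Fintype n] [DecidableEq n]
    [CommSemiring R] (N : Matrix l m R) (M : Matrix m n R) :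
    Set.range (N * M).col = N.mulVecLin '' Set.range M.col := by
  rw [← Set.range_comp]
  exact congrArg Set.range (funext (col_mul N M))

lemma Matrix.range_col_mul_permMatrix {m n R : Type*} [Fintype n] [DecidableEq n]
    [NonAssocSemiring R] (M : Matrix m n R) (σ : Equiv.Perm n) :
    Set.range (M * σ.permMatrix R).col = Set.range M.col := by
  rw [PEquiv.mul_toMatrix_toPEquiv]
  exact EquivLike.range_comp M.col σ.symm

lemma Matrix.isUnit_det_mul_mul_iff {n R : Type*} [Fintype n] [DecidableEq n] [CommRing R]
    {N P : Matrix n n R} (hN : IsUnit N.det) (hP : IsUnit P.det) (M : Matrix n n R) :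
    IsUnit (N * M * P).det ↔ IsUnit M.det := by
  simp only [det_mul, IsUnit.mul_iff, hN, hP, true_and, and_true]

lemma IsPermMatrix.exists_eq_permMatrix {n : ℕ} {P : Matrix (Fin n) (Fin n) ℝ}
    (hP : IsPermMatrix P) : ∃ σ : Equiv.Perm (Fin n), P = σ.permMatrix ℝ := by
  obtain ⟨σ, rfl⟩ := hP
  refine ⟨σ⁻¹, ?_⟩
  ext i j
  simp [PEquiv.toMatrix_apply, Equiv.toPEquiv_apply, Equiv.eq_symm_apply, eq_comm]

lemma IsPermMatrix.isUnit_det {n : ℕ} {P : Matrix (Fin n) (Fin n) ℝ} (hP : IsPermMatrix P) :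
    IsUnit P.det := by
  obtain ⟨σ, rfl⟩ := hP.exists_eq_permMatrix
  rw [det_permutation]
  exact (Equiv.Perm.sign σ).isUnit.map (Int.castRingHom ℝ)

lemma nshcSet_eq_vadd {n : ℕ} (x0 : Fin n → ℝ) (S T : Matrix (Fin n) (Fin n) ℝ) :
    nshcSet x0 S T = x0 +ᵥ (insert 0 (Set.range S.col) + insert 0 (Set.range T.col)) := by
  ext y
  simp only [nshcSet, Set.mem_union, Set.mem_singleton_iff, Set.mem_ofPred_eq, Set.mem_vadd_set,
    Set.mem_add, Set.mem_insert_iff, Set.mem_range, vadd_eq_add, col_apply']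
  constructor
  · rintro (((rfl | ⟨i, rfl⟩) | ⟨j, rfl⟩) | ⟨i, j, rfl⟩)
    · exact ⟨0, ⟨0, .inl rfl, 0, .inl rfl, add_zero 0⟩, add_zero _⟩
    · exact ⟨_, ⟨_, .inr ⟨i, rfl⟩, 0, .inl rfl, add_zero _⟩, rfl⟩
    · exact ⟨_, ⟨0, .inl rfl, _, .inr ⟨j, rfl⟩, zero_add _⟩, rfl⟩
    · exact ⟨_, ⟨_, .inr ⟨i, rfl⟩, _, .inr ⟨j, rfl⟩, rfl⟩, (add_assoc ..).symm⟩
  · rintro ⟨_, ⟨_, rfl | ⟨i, rfl⟩, _, rfl | ⟨j, rfl⟩, rfl⟩, rfl⟩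
    · exact .inl (.inl (.inl (by simp)))
    · exact .inl (.inr ⟨j, by simp⟩)
    · exact .inl (.inl (.inr ⟨i, by simp⟩))
    · exact .inr ⟨i, j, (add_assoc ..).symm⟩

lemma nshcSet_mul_permMatrix {n : ℕ} (x0 : Fin n → ℝ) (S T N : Matrix (Fin n) (Fin n) ℝ)
    (σ τ : Equiv.Perm (Fin n)) :
    nshcSet x0 (N * S * σ.permMatrix ℝ) (N * T * τ.permMatrix ℝ) =
      x0 +ᵥ N.mulVecLin '' (insert 0 (Set.range S.col) + insert 0 (Set.range T.col)) := by
  rw [nshcSet_eq_vadd, range_col_mul_permMatrix, range_col_mul_permMatrix, range_col_mul,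
    range_col_mul, Set.image_add, Set.image_insert_eq, Set.image_insert_eq, map_zero]

lemma ncard_nshcSet_mul_mul {n : ℕ} (x0 : Fin n → ℝ) {N P1 P2 : Matrix (Fin n) (Fin n) ℝ}
    (hN : IsUnit N.det) (hP1 : IsPermMatrix P1) (hP2 : IsPermMatrix P2)
    (S T : Matrix (Fin n) (Fin n) ℝ) :
    (nshcSet x0 (N * S * P1) (N * T * P2)).ncard = (nshcSet x0 S T).ncard := by
  obtain ⟨σ, rfl⟩ := hP1.exists_eq_permMatrix
  obtain ⟨τ, rfl⟩ := hP2.exists_eq_permMatrix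
  have hinj : Function.Injective N.mulVecLin :=
    mulVec_injective_iff_isUnit.2 ((isUnit_iff_isUnit_det N).2 hN)
  rw [nshcSet_mul_permMatrix, nshcSet_eq_vadd, Set.ncard_vadd_set, Set.ncard_vadd_set,
    Set.ncard_image_of_injective _ hinj]

/-- invariance of minimal poisedness for NSHC under
S ↦ NSP₁, T ↦ NTP₂ with N invertible and P₁, P₂ permutation matrices. -/
theorem minimal_poised_NSHC_invariance {n : ℕ}
    (x0 : Fin n → ℝ) (S T N P1 P2 : Matrix (Fin n) (Fin n) ℝ)
    (hN : IsUnit N.det) (hP1 : IsPermMatrix P1) (hP2 : IsPermMatrix P2) :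
    IsMinimalPoisedNSHC x0 S T ↔ IsMinimalPoisedNSHC x0 (N * S * P1) (N * T * P2) := by
  rw [IsMinimalPoisedNSHC, IsMinimalPoisedNSHC, isUnit_det_mul_mul_iff hN hP1.isUnit_det,
    isUnit_det_mul_mul_iff hN hP2.isUnit_det, ncard_nshcSet_mul_mul x0 hN hP1 hP2]
end

section
/- Let S ∈ ℝ^{n×n} have full rank, let x⁰ ∈ ℝⁿ, and define U_0 = S. Then the set {x⁰} ∪ {x⁰+sⁱ}ᵢ ∪ {x⁰+2sⁱ}ᵢ ∪ {x⁰+sⁱ+sʲ}_{i<j} is poised for quadratic interpolation: if a quadratic Q(x) = α₀ + αᵀx + ½xᵀHx with H symmetric vanishes at all these (n+1)(n+2)/2 points, then α₀ = 0, α = 0, and H = 0. -/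
/-!
Around `x⁰` the quadratic reads `Q (x⁰ + u) = Q x⁰ + q u` with `q u = g ⬝ᵥ u + ½ uᵀ H u` and
`g = a + H x⁰`. Since `q (u + v) = q u + q v + uᵀ H v`, the vanishing of `q` at `sⁱ`, `2sⁱ` and
`sⁱ + sʲ` forces `(sⁱ)ᵀ H sʲ = 0` for all `i, j`, hence `H = 0` because the `sⁱ` form a basis;
then `g ⬝ᵥ sⁱ = q sⁱ = 0` gives `g = a = 0`, and finally `α₀ = Q x⁰ = 0`.
-/

open Matrix

namespace Matrix

section Basis

variable {R m ι : Type*} [CommRing R] [Fintype m] [DecidableEq m]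

theorem eq_zero_of_dotProduct_basis_eq_zero (b : Module.Basis ι R (m → R)) {v : m → R}
    (h : ∀ i, v ⬝ᵥ b i = 0) : v = 0 :=
  (dotProductEquiv R m).map_eq_zero_iff.mp (b.ext fun i => by simpa using h i)

theorem eq_zero_of_dotProduct_mulVec_basis_eq_zero (b : Module.Basis ι R (m → R))
    {H : Matrix m m R} (h : ∀ i j, b i ⬝ᵥ H *ᵥ b j = 0) : H = 0 :=
  toBilin'.map_eq_zero_iff.mp <|
    LinearMap.BilinForm.ext_basis b fun i j => by simpa [toBilin'_apply'] using h i j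

end Basis

theorem IsSymm.dotProduct_mulVec_comm {R m : Type*} [CommSemiring R] [Fintype m]
    {H : Matrix m m R} (hH : H.IsSymm) (u v : m → R) : u ⬝ᵥ H *ᵥ v = v ⬝ᵥ H *ᵥ u := by
  rw [dotProduct_mulVec, ← mulVec_transpose, hH.eq, dotProduct_comm]

end Matrix

section Quadratic

variable {K m : Type*} [Field K] [Fintype m] {H : Matrix m m K}

def quadraticFn (a0 : K) (a : m → K) (H : Matrix m m K) (x : m → K) : K :=
  a0 + a ⬝ᵥ x + (1 / 2) * (x ⬝ᵥ H *ᵥ x)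

theorem quadraticFn_add [CharZero K] (hH : H.IsSymm) (a0 : K) (a x u : m → K) :
    quadraticFn a0 a H (x + u) = quadraticFn a0 a H x + quadraticFn 0 (a + H *ᵥ x) H u := by
  simp only [quadraticFn, mulVec_add, dotProduct_add, add_dotProduct]
  rw [dotProduct_comm (H *ᵥ x) u]
  linear_combination (1 / 2 : K) * hH.dotProduct_mulVec_comm x u

theorem quadraticFn_zero_add [CharZero K] (hH : H.IsSymm) (g u v : m → K) :
    quadraticFn 0 g H (u + v) = quadraticFn 0 g H u + quadraticFn 0 g H v + u ⬝ᵥ H *ᵥ v := by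
  simp only [quadraticFn, mulVec_add, dotProduct_add, add_dotProduct]
  linear_combination (1 / 2 : K) * hH.dotProduct_mulVec_comm v u

theorem dotProduct_mulVec_eq_zero_of_quadraticFn_eq_zero [CharZero K] {ι : Type*}
    [LinearOrder ι] (hH : H.IsSymm) {g : m → K} {s : ι → m → K}
    (h1 : ∀ i, quadraticFn 0 g H (s i) = 0)
    (h2 : ∀ i, quadraticFn 0 g H (s i + s i) = 0)
    (h3 : ∀ i j, i < j → quadraticFn 0 g H (s i + s j) = 0) (i j : ι) :
    s i ⬝ᵥ H *ᵥ s j = 0 := by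
  have hle : ∀ i j, i ≤ j → s i ⬝ᵥ H *ᵥ s j = 0 := fun i j hij => by
    have hsum := quadraticFn_zero_add hH g (s i) (s j)
    rcases hij.lt_or_eq with hij | rfl
    · rwa [h3 i j hij, h1, h1, zero_add, zero_add, eq_comm] at hsum
    · rwa [h2, h1, zero_add, zero_add, eq_comm] at hsum
  rcases le_total i j with hij | hji
  · exact hle i j hij
  · rw [hH.dotProduct_mulVec_comm]
    exact hle j i hji

end Quadratic

/-- with S full rank and U₀ = S, the set
{x⁰} ∪ {x⁰+sⁱ} ∪ {x⁰+2sⁱ} ∪ {x⁰+sⁱ+sʲ}_{i<j} is poised for quadratic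
interpolation: any quadratic with symmetric Hessian vanishing on it is zero. -/
theorem minimal_set_U0_poised_for_QI {n : ℕ}
    (x0 : Fin n → ℝ) (s : Fin n → (Fin n → ℝ)) (hs : LinearIndependent ℝ s)
    (a0 : ℝ) (a : Fin n → ℝ) (H : Matrix (Fin n) (Fin n) ℝ) (hH : H.IsSymm)
    (Q : (Fin n → ℝ) → ℝ)
    (hQ : ∀ x, Q x = a0 + a ⬝ᵥ x + (1 / 2) * (x ⬝ᵥ H.mulVec x))
    (h0 : Q x0 = 0)
    (h1 : ∀ i, Q (x0 + s i) = 0)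
    (h2 : ∀ i, Q (x0 + s i + s i) = 0)
    (h3 : ∀ i j, i < j → Q (x0 + s i + s j) = 0) :
    a0 = 0 ∧ a = 0 ∧ H = 0 := by
  have hQ' : Q = quadraticFn a0 a H := funext hQ
  have hshift : ∀ u, Q (x0 + u) = quadraticFn 0 (a + H *ᵥ x0) H u := fun u => by
    rw [hQ', quadraticFn_add hH, ← hQ', h0, zero_add]
  have hq1 : ∀ i, quadraticFn 0 (a + H *ᵥ x0) H (s i) = 0 := fun i => by rw [← hshift, h1]
  have hHs := dotProduct_mulVec_eq_zero_of_quadraticFn_eq_zero hH hq1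
    (fun i => by rw [← hshift, ← add_assoc, h2])
    (fun i j hij => by rw [← hshift, ← add_assoc, h3 i j hij])
  let b := basisOfLinearIndependentOfCardEqFinrank' s hs (by simp)
  have hH0 : H = 0 := eq_zero_of_dotProduct_mulVec_basis_eq_zero b (by simpa [b] using hHs)
  have ha : a = 0 := eq_zero_of_dotProduct_basis_eq_zero b fun i => by
    simpa [b, quadraticFn, hH0] using hq1 i
  refine ⟨?_, ha, hH0⟩
  simpa [ha, hH0] using (hQ x0).symm.trans h0
end

section
/- Let S ∈ ℝ^{n×n} have full rank, let x⁰ ∈ ℝⁿ, and let U_n have columns sⁱ − sⁿ for i < n and −sⁿ for i = n. Then the set {x⁰} ∪ {x⁰+sⁱ}ᵢ ∪ {x⁰−sⁿ} ∪ {x⁰+sⁱ−sⁿ}_{i<n} ∪ {x⁰+2sⁱ−sⁿ}_{i<n} ∪ {x⁰+sⁱ+sʲ−sⁿ}_{i<j<n} is poised for quadratic interpolation. -/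
open Matrix

/-- with S ∈ ℝ^{(n+1)×(n+1)} full rank and U_{n+1} having columns
sⁱ − sˡᵃˢᵗ (i ≠ last) and −sˡᵃˢᵗ, the set
{x⁰} ∪ {x⁰+sⁱ} ∪ {x⁰−sˡ} ∪ {x⁰+sⁱ−sˡ} ∪ {x⁰+2sⁱ−sˡ} ∪ {x⁰+sⁱ+sʲ−sˡ}_{i<j}
(indices ≠ last) is poised for quadratic interpolation. -/
theorem minimal_set_Un_poised_for_QI {n : ℕ}
    (x0 : Fin (n + 1) → ℝ) (s : Fin (n + 1) → (Fin (n + 1) → ℝ))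
    (hs : LinearIndependent ℝ s)
    (a0 : ℝ) (a : Fin (n + 1) → ℝ) (H : Matrix (Fin (n + 1)) (Fin (n + 1)) ℝ)
    (hH : H.IsSymm)
    (Q : (Fin (n + 1) → ℝ) → ℝ)
    (hQ : ∀ x, Q x = a0 + a ⬝ᵥ x + (1 / 2) * (x ⬝ᵥ H.mulVec x))
    (h0 : Q x0 = 0)
    (h1 : ∀ i, Q (x0 + s i) = 0)
    (h2 : Q (x0 - s (Fin.last n)) = 0)
    (h3 : ∀ i, i ≠ Fin.last n → Q (x0 + s i - s (Fin.last n)) = 0)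
    (h4 : ∀ i, i ≠ Fin.last n → Q (x0 + s i + s i - s (Fin.last n)) = 0)
    (h5 : ∀ i j, i < j → i ≠ Fin.last n → j ≠ Fin.last n →
      Q (x0 + s i + s j - s (Fin.last n)) = 0) :
    a0 = 0 ∧ a = 0 ∧ H = 0 := by
  set l := Fin.last n with hl
  -- symmetry of the bilinear form
  have hsym : ∀ u v : Fin (n+1) → ℝ, u ⬝ᵥ H.mulVec v = v ⬝ᵥ H.mulVec u := by
    intro u v
    rw [Matrix.dotProduct_mulVec, ← Matrix.mulVec_transpose, hH.eq, dotProduct_comm]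
  -- expansion of Q at x0 + v
  have hg : ∀ v : Fin (n+1) → ℝ, Q (x0 + v)
      = a ⬝ᵥ v + x0 ⬝ᵥ H.mulVec v + (1 / 2) * (v ⬝ᵥ H.mulVec v) := by
    intro v
    have h0' := h0
    rw [hQ] at h0' ⊢
    simp only [Matrix.mulVec_add, dotProduct_add, add_dotProduct]
    rw [hsym v x0]
    linarith
  -- the hypotheses in terms of g
  have eq1 : ∀ i, a ⬝ᵥ s i + x0 ⬝ᵥ H.mulVec (s i)
      + (1 / 2) * (s i ⬝ᵥ H.mulVec (s i)) = 0 := by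
    intro i; rw [← hg]; exact h1 i
  have eq2 : -(a ⬝ᵥ s l) - x0 ⬝ᵥ H.mulVec (s l)
      + (1 / 2) * (s l ⬝ᵥ H.mulVec (s l)) = 0 := by
    have h2' : Q (x0 + (-(s l))) = 0 := by
      rw [show x0 + (-(s l)) = x0 - s l by abel]; exact h2
    rw [hg] at h2'
    simp only [dotProduct_neg, neg_dotProduct, Matrix.mulVec_neg,
      neg_neg] at h2'
    linarith
  -- basic consequences for l
  have hLl : a ⬝ᵥ s l + x0 ⬝ᵥ H.mulVec (s l) = 0 := by
    have := eq1 l; linarith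
  have hBll : s l ⬝ᵥ H.mulVec (s l) = 0 := by
    have := eq1 l; linarith
  -- expand a generic g (s i - s l), g (2 s i - s l), g (s i + s j - s l)
  have eq3 : ∀ i, i ≠ l → a ⬝ᵥ s i + x0 ⬝ᵥ H.mulVec (s i)
      + (1 / 2) * (s i ⬝ᵥ H.mulVec (s i)) - s i ⬝ᵥ H.mulVec (s l) = 0 := by
    intro i hi
    have h3' : Q (x0 + (s i - s l)) = 0 := by
      rw [show x0 + (s i - s l) = x0 + s i - s l by abel]; exact h3 i hi
    rw [hg] at h3'
    simp only [dotProduct_sub, sub_dotProduct, Matrix.mulVec_sub] at h3'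
    have hs1 := hsym (s l) (s i)
    linarith
  have eq4 : ∀ i, i ≠ l → 2 * (a ⬝ᵥ s i) + 2 * (x0 ⬝ᵥ H.mulVec (s i))
      + 2 * (s i ⬝ᵥ H.mulVec (s i)) - 2 * (s i ⬝ᵥ H.mulVec (s l)) = 0 := by
    intro i hi
    have h4' : Q (x0 + (s i + s i - s l)) = 0 := by
      rw [show x0 + (s i + s i - s l) = x0 + s i + s i - s l by abel]; exact h4 i hi
    rw [hg] at h4'
    simp only [dotProduct_sub, sub_dotProduct, Matrix.mulVec_sub,
      dotProduct_add, add_dotProduct, Matrix.mulVec_add] at h4'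
    have hs1 := hsym (s l) (s i)
    linarith
  -- diagonal and l-column vanish
  have hBil : ∀ i, s i ⬝ᵥ H.mulVec (s l) = 0 := by
    intro i
    by_cases hi : i = l
    · rw [hi]; exact hBll
    · have e1 := eq1 i; have e3 := eq3 i hi; linarith
  have hBii : ∀ i, s i ⬝ᵥ H.mulVec (s i) = 0 := by
    intro i
    by_cases hi : i = l
    · rw [hi]; exact hBll
    · have e1 := eq1 i; have e3 := eq3 i hi; have e4 := eq4 i hi
      have := hBil i; linarith
  have hL : ∀ i, a ⬝ᵥ s i + x0 ⬝ᵥ H.mulVec (s i) = 0 := by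
    intro i
    by_cases hi : i = l
    · rw [hi]; exact hLl
    · have e1 := eq1 i; have := hBii i; linarith
  -- off-diagonal terms
  have hBij : ∀ i j, s i ⬝ᵥ H.mulVec (s j) = 0 := by
    have key : ∀ i j, i < j → i ≠ l → j ≠ l → s i ⬝ᵥ H.mulVec (s j) = 0 := by
      intro i j hij hi hj
      have h5' : Q (x0 + (s i + s j - s l)) = 0 := by
        rw [show x0 + (s i + s j - s l) = x0 + s i + s j - s l by abel]; exact h5 i j hij hi hj
      rw [hg] at h5'
      simp only [dotProduct_sub, sub_dotProduct, Matrix.mulVec_sub,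
        dotProduct_add, add_dotProduct, Matrix.mulVec_add] at h5'
      have hsij := hsym (s j) (s i)
      have hsil := hsym (s l) (s i)
      have hsjl := hsym (s l) (s j)
      have := hL i; have := hL j; have := hLl
      have := hBii i; have := hBii j; have := hBll
      have := hBil i; have := hBil j
      linarith
    intro i j
    rcases lt_trichotomy i j with hij | hij | hij
    · by_cases hj : j = l
      · rw [hj]; exact hBil i
      · exact key i j hij (by rintro rfl; exact hj (le_antisymm (Fin.le_last j) hij.le ▸ rfl) |>.elim) hj
    · rw [hij]; exact hBii j
    · by_cases hi : i = l
      · rw [hi, hsym]; exact hBil j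
      · rw [hsym]; exact key j i hij (by rintro rfl; exact hi (le_antisymm (Fin.le_last i) hij.le ▸ rfl) |>.elim) hi
  -- s spans everything
  have hcard : Fintype.card (Fin (n+1)) = Module.finrank ℝ (Fin (n+1) → ℝ) := by
    simp [Module.finrank_fintype_fun_eq_card]
  have hspan : Submodule.span ℝ (Set.range s) = ⊤ := by
    have hb := coe_basisOfLinearIndependentOfCardEqFinrank hs hcard
    rw [← hb]; exact (basisOfLinearIndependentOfCardEqFinrank hs hcard).span_eq
  have hmem : ∀ v : Fin (n+1) → ℝ, v ∈ Submodule.span ℝ (Set.range s) := by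
    intro v; rw [hspan]; trivial
  -- dot product against everything vanishes ⇒ zero
  have hdotzero : ∀ w : Fin (n+1) → ℝ, (∀ i, s i ⬝ᵥ w = 0) → w = 0 := by
    intro w hw
    have hall : ∀ v : Fin (n+1) → ℝ, v ⬝ᵥ w = 0 := by
      intro v
      induction hmem v using Submodule.span_induction with
      | mem x hx => obtain ⟨i, rfl⟩ := hx; exact hw i
      | zero => simp
      | add x y _ _ hx hy => simp [add_dotProduct, hx, hy]
      | smul c x _ hx => simp [smul_dotProduct, hx]
    exact (dotProduct_self_eq_zero).mp (hall w)
  -- H = 0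
  have hHcol : ∀ v : Fin (n+1) → ℝ, H.mulVec v = 0 := by
    intro v
    induction hmem v using Submodule.span_induction with
    | mem x hx =>
        obtain ⟨j, rfl⟩ := hx
        exact hdotzero _ (fun i => hBij i j)
    | zero => simp [Matrix.mulVec_zero]
    | add x y _ _ hx hy => simp [Matrix.mulVec_add, hx, hy]
    | smul c x _ hx => simp [Matrix.mulVec_smul, hx]
  have hH0 : H = 0 := by
    ext i j
    have := congrFun (hHcol (Pi.single j 1)) i
    simpa [Matrix.mulVec_single] using this
  -- a = 0
  have ha0' : ∀ i, s i ⬝ᵥ a = 0 := by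
    intro i
    have := hL i
    rw [hHcol (s i)] at this
    simp only [dotProduct_zero] at this
    rw [dotProduct_comm]; linarith
  have ha : a = 0 := hdotzero a ha0'
  -- a0 = 0
  have ha00 : a0 = 0 := by
    have := h0
    rw [hQ, ha, hH0] at this
    simpa using this
  exact ⟨ha00, ha, hH0⟩
end

section
/- In ℝ², the set 𝒳 = {(0,0), e¹, e², −e¹, −e², −e¹−e²} is poised for quadratic interpolation, yet there do not exist full-rank matrices S, T ∈ ℝ^{2×2} such that the set of distinct points {x⁰} ∪ {x⁰+sⁱ} ∪ {x⁰+tʲ} ∪ {x⁰+sⁱ+tʲ} (with x⁰ = (0,0)) equals 𝒳; i.e., 𝒳 cannot be expressed as a minimal poised set for nested-set Hessian computation at the origin. -/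
set_option linter.unnecessarySeqFocus false
open Matrix

set_option maxHeartbeats 4000000 in
/-- The combinatorial core: no four vectors from 𝒳 can serve as the columns of
full-rank `S`, `T` with all pairwise sums landing back in 𝒳. -/
theorem nshc_key : ∀ s1 s2 t1 t2 : Fin 2 → ℝ,
    s1 ∈ ({![0, 0], ![1, 0], ![0, 1], ![-1, 0], ![0, -1], ![-1, -1]} : Set (Fin 2 → ℝ)) →
    s2 ∈ ({![0, 0], ![1, 0], ![0, 1], ![-1, 0], ![0, -1], ![-1, -1]} : Set (Fin 2 → ℝ)) →
    t1 ∈ ({![0, 0], ![1, 0], ![0, 1], ![-1, 0], ![0, -1], ![-1, -1]} : Set (Fin 2 → ℝ)) →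
    t2 ∈ ({![0, 0], ![1, 0], ![0, 1], ![-1, 0], ![0, -1], ![-1, -1]} : Set (Fin 2 → ℝ)) →
    s1 + t1 ∈ ({![0, 0], ![1, 0], ![0, 1], ![-1, 0], ![0, -1], ![-1, -1]} : Set (Fin 2 → ℝ)) →
    s1 + t2 ∈ ({![0, 0], ![1, 0], ![0, 1], ![-1, 0], ![0, -1], ![-1, -1]} : Set (Fin 2 → ℝ)) →
    s2 + t1 ∈ ({![0, 0], ![1, 0], ![0, 1], ![-1, 0], ![0, -1], ![-1, -1]} : Set (Fin 2 → ℝ)) →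
    s2 + t2 ∈ ({![0, 0], ![1, 0], ![0, 1], ![-1, 0], ![0, -1], ![-1, -1]} : Set (Fin 2 → ℝ)) →
    s1 ≠ ![0,0] → s2 ≠ ![0,0] → t1 ≠ ![0,0] → t2 ≠ ![0,0] →
    s1 ≠ s2 → t1 ≠ t2 → False := by
  intro s1 s2 t1 t2 hs1 hs2 ht1 ht2 h11 h12 h21 h22 hz1 hz2 hz3 hz4 hnes hnet
  simp only [Set.mem_insert_iff, Set.mem_singleton_iff] at hs1 hs2 ht1 ht2
  rcases hs1 with rfl|rfl|rfl|rfl|rfl|rfl <;>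
    [exact hz1 rfl; skip; skip; skip; skip; skip] <;>
  rcases ht1 with rfl|rfl|rfl|rfl|rfl|rfl <;>
    first
    | exact hz3 rfl
    | (simp only [Set.mem_insert_iff, Set.mem_singleton_iff, funext_iff,
        Fin.forall_fin_two, Matrix.cons_add_cons, Matrix.empty_add_empty,
        Matrix.cons_val_zero, Matrix.cons_val_one, Matrix.head_cons] at h11 <;> norm_num at h11; done)
    | (rcases ht2 with rfl|rfl|rfl|rfl|rfl|rfl <;>
        first
        | exact hz4 rfl
        | exact hnet rfl
        | (simp only [Set.mem_insert_iff, Set.mem_singleton_iff, funext_iff,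
            Fin.forall_fin_two, Matrix.cons_add_cons, Matrix.empty_add_empty,
            Matrix.cons_val_zero, Matrix.cons_val_one, Matrix.head_cons] at h12 <;> norm_num at h12; done)
        | (rcases hs2 with rfl|rfl|rfl|rfl|rfl|rfl <;>
            first
            | exact hz2 rfl
            | exact hnes rfl
            | (simp only [Set.mem_insert_iff, Set.mem_singleton_iff, funext_iff,
                Fin.forall_fin_two, Matrix.cons_add_cons, Matrix.empty_add_empty,
                Matrix.cons_val_zero, Matrix.cons_val_one, Matrix.head_cons] at h21 <;> norm_num at h21; done)
            | (simp only [Set.mem_insert_iff, Set.mem_singleton_iff, funext_iff,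
                Fin.forall_fin_two, Matrix.cons_add_cons, Matrix.empty_add_empty,
                Matrix.cons_val_zero, Matrix.cons_val_one, Matrix.head_cons] at h22 <;> norm_num at h22)))

/-- in ℝ², 𝒳 = {0, e¹, e², −e¹, −e², −e¹−e²} is poised for
quadratic interpolation, yet cannot be written as 𝒮(0;S,T) for full-rank
S, T ∈ ℝ^{2×2}, i.e. it is not a minimal poised set for NSHC at the origin. -/
theorem poised_but_not_minimal_NSHC :
    (∀ (a0 : ℝ) (a : Fin 2 → ℝ) (H : Matrix (Fin 2) (Fin 2) ℝ), H.IsSymm →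
      (∀ y ∈ ({![0, 0], ![1, 0], ![0, 1], ![-1, 0], ![0, -1], ![-1, -1]} :
          Set (Fin 2 → ℝ)),
        a0 + a ⬝ᵥ y + (1 / 2) * (y ⬝ᵥ H.mulVec y) = 0) →
      a0 = 0 ∧ a = 0 ∧ H = 0)
    ∧ ¬ ∃ S T : Matrix (Fin 2) (Fin 2) ℝ, IsUnit S.det ∧ IsUnit T.det ∧
        nshcSet ![0, 0] S T
          = ({![0, 0], ![1, 0], ![0, 1], ![-1, 0], ![0, -1], ![-1, -1]} :
              Set (Fin 2 → ℝ)) := by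
  constructor
  · intro a0 a H hsym h
    have h0 := h ![0,0] (by simp)
    have h1 := h ![1,0] (by simp)
    have h2 := h ![0,1] (by simp)
    have h3 := h ![-1,0] (by simp)
    have h4 := h ![0,-1] (by simp)
    have h5 := h ![-1,-1] (by simp)
    have hs : H 0 1 = H 1 0 := by
      have := congr_fun (congr_fun hsym 1) 0
      simpa [Matrix.transpose_apply] using this
    simp only [dotProduct, mulVec, Fin.sum_univ_two, Matrix.cons_val_zero,
      Matrix.cons_val_one, Matrix.head_cons] at h0 h1 h2 h3 h4 h5
    refine ⟨by linarith, ?_, ?_⟩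
    · funext i; fin_cases i <;> simp <;> linarith
    · ext i j; fin_cases i <;> fin_cases j <;> simp <;> linarith
  · rintro ⟨S, T, hS, hT, hE⟩
    have hx0 : (![0, 0] : Fin 2 → ℝ) = 0 := by
      funext r; fin_cases r <;> rfl
    have hsmem : ∀ i, (fun r => S r i) ∈
        ({![0, 0], ![1, 0], ![0, 1], ![-1, 0], ![0, -1], ![-1, -1]} : Set (Fin 2 → ℝ)) := by
      intro i; rw [← hE]
      exact Or.inl (Or.inl (Or.inr ⟨i, by rw [hx0, zero_add]⟩))
    have htmem : ∀ j, (fun r => T r j) ∈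
        ({![0, 0], ![1, 0], ![0, 1], ![-1, 0], ![0, -1], ![-1, -1]} : Set (Fin 2 → ℝ)) := by
      intro j; rw [← hE]
      exact Or.inl (Or.inr ⟨j, by rw [hx0, zero_add]⟩)
    have hstmem : ∀ i j, ((fun r => S r i) + fun r => T r j) ∈
        ({![0, 0], ![1, 0], ![0, 1], ![-1, 0], ![0, -1], ![-1, -1]} : Set (Fin 2 → ℝ)) := by
      intro i j; rw [← hE]
      exact Or.inr ⟨i, j, by rw [hx0, zero_add]⟩
    have hSne : S.det ≠ 0 := hS.ne_zero
    have hTne : T.det ≠ 0 := hT.ne_zero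
    have hdS : S.det = S 0 0 * S 1 1 - S 0 1 * S 1 0 := Matrix.det_fin_two S
    have hdT : T.det = T 0 0 * T 1 1 - T 0 1 * T 1 0 := Matrix.det_fin_two T
    refine nshc_key (fun r => S r 0) (fun r => S r 1) (fun r => T r 0) (fun r => T r 1)
      (hsmem 0) (hsmem 1) (htmem 0) (htmem 1)
      (hstmem 0 0) (hstmem 0 1) (hstmem 1 0) (hstmem 1 1) ?_ ?_ ?_ ?_ ?_ ?_
    · intro h
      have h0 := congr_fun h 0
      have h1 := congr_fun h 1
      simp only [hx0, Pi.zero_apply] at h0 h1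
      apply hSne; rw [hdS, h0, h1]; ring
    · intro h
      have h0 := congr_fun h 0
      have h1 := congr_fun h 1
      simp only [hx0, Pi.zero_apply] at h0 h1
      apply hSne; rw [hdS, h0, h1]; ring
    · intro h
      have h0 := congr_fun h 0
      have h1 := congr_fun h 1
      simp only [hx0, Pi.zero_apply] at h0 h1
      apply hTne; rw [hdT, h0, h1]; ring
    · intro h
      have h0 := congr_fun h 0
      have h1 := congr_fun h 1
      simp only [hx0, Pi.zero_apply] at h0 h1
      apply hTne; rw [hdT, h0, h1]; ring
    · intro h
      have h0 := congr_fun h 0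
      have h1 := congr_fun h 1
      apply hSne; rw [hdS, h0, h1]; ring
    · intro h
      have h0 := congr_fun h 0
      have h1 := congr_fun h 1
      apply hTne; rw [hdT, h0, h1]; ring
end

section
/- Let f : ℝⁿ → ℝ be C³ on B(x⁰, Δ̄) with ∇²f Lipschitz with constant L on B(x⁰, Δ̄), and let s, t ∈ ℝⁿ with x⁰, x⁰+s, x⁰+t, x⁰+s+t ∈ B(x⁰, Δ̄). Then |f(x⁰+s+t) − f(x⁰+s) − f(x⁰+t) + f(x⁰) − sᵀ∇²f(x⁰)t| ≤ (L/6)((‖s‖+‖t‖)³ + ‖s‖³ + ‖t‖³). -/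
open Matrix Metric

/-- The Hessian matrix of f at x, as the matrix of second directional
derivatives along standard basis vectors. -/
noncomputable def hess {n : ℕ} (f : EuclideanSpace ℝ (Fin n) → ℝ)
    (x : EuclideanSpace ℝ (Fin n)) : Matrix (Fin n) (Fin n) ℝ :=
  Matrix.of fun i j =>
    iteratedFDeriv ℝ 2 f x ![EuclideanSpace.single i 1, EuclideanSpace.single j 1]

/-!
Let `R(d) = f(x⁰ + d) - f(x⁰) - Df(x⁰) d - D²f(x⁰)(d, d) / 2` be the second-order Taylor
remainder. Since `D²f(x⁰)` is symmetric, the second difference minus `sᵀ ∇²f(x⁰) t` equals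
`R(s + t) - R(s) - R(t)`. Along `u ↦ x⁰ + u d` the Lipschitz bound, transferred from the Hessian
matrix to the bilinear map `D²f` through the operator norm, bounds the second derivative of the
remainder by `L ‖d‖³ u`; integrating twice gives `|R(d)| ≤ L ‖d‖³ / 6`, and the triangle
inequality with `‖s + t‖ ≤ ‖s‖ + ‖t‖` finishes.
-/

open Set

theorem ContinuousLinearMap.apply_apply_eq_sum_single {ι : Type*} [Fintype ι] [DecidableEq ι]
    (B : EuclideanSpace ℝ ι →L[ℝ] EuclideanSpace ℝ ι →L[ℝ] ℝ) (s t : EuclideanSpace ℝ ι) :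
    B s t = ∑ i, ∑ j, s i * B (EuclideanSpace.single i 1) (EuclideanSpace.single j 1) * t j := by
  conv_lhs => rw [← (EuclideanSpace.basisFun ι ℝ).sum_repr s,
    ← (EuclideanSpace.basisFun ι ℝ).sum_repr t]
  simp only [map_sum, map_smul, _root_.sum_apply, _root_.smul_apply, EuclideanSpace.basisFun_repr,
    EuclideanSpace.basisFun_apply, smul_eq_mul, Finset.mul_sum]
  rw [Finset.sum_comm]
  exact Finset.sum_congr rfl fun i _ => Finset.sum_congr rfl fun j _ => by ring

theorem Matrix.sum_mul_mul_eq_inner_toEuclideanLin {m n : ℕ} (A : Matrix (Fin m) (Fin n) ℝ)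
    (s : EuclideanSpace ℝ (Fin m)) (t : EuclideanSpace ℝ (Fin n)) :
    ∑ i, ∑ j, s i * A i j * t j = inner ℝ s (A.toEuclideanLin t) := by
  simp only [EuclideanSpace.inner_eq_star_dotProduct, toLpLin_apply, dotProduct, mulVec,
    star_trivial, Finset.sum_mul]
  exact Finset.sum_congr rfl fun i _ => Finset.sum_congr rfl fun j _ => by ring

theorem Matrix.abs_sum_mul_mul_le_opNorm {m n : ℕ} (A : Matrix (Fin m) (Fin n) ℝ)
    (s : EuclideanSpace ℝ (Fin m)) (t : EuclideanSpace ℝ (Fin n)) :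
    |∑ i, ∑ j, s i * A i j * t j| ≤ opNorm A * ‖s‖ * ‖t‖ := by
  rw [A.sum_mul_mul_eq_inner_toEuclideanLin, mul_comm (opNorm A), mul_assoc]
  exact (abs_real_inner_le_norm _ _).trans <| mul_le_mul_of_nonneg_left
    ((LinearMap.toContinuousLinearMap A.toEuclideanLin).le_opNorm t) (norm_nonneg s)

section Hessian

variable {n : ℕ} (f : EuclideanSpace ℝ (Fin n) → ℝ)

theorem sum_mul_hess_mul_eq_fderiv_fderiv (x s t : EuclideanSpace ℝ (Fin n)) :
    ∑ i, ∑ j, s i * hess f x i j * t j = fderiv ℝ (fderiv ℝ f) x s t := by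
  simp [ContinuousLinearMap.apply_apply_eq_sum_single (fderiv ℝ (fderiv ℝ f) x) s t, hess,
    iteratedFDeriv_two_apply]

theorem norm_fderiv_fderiv_sub_le_opNorm_hess_sub (y z : EuclideanSpace ℝ (Fin n)) :
    ‖fderiv ℝ (fderiv ℝ f) y - fderiv ℝ (fderiv ℝ f) z‖ ≤ opNorm (hess f y - hess f z) := by
  refine ContinuousLinearMap.opNorm_le_bound₂ _ (norm_nonneg _) fun a b => ?_
  have := (hess f y - hess f z).abs_sum_mul_mul_le_opNorm a b
  simpa [mul_sub, sub_mul, Finset.sum_sub_distrib, sum_mul_hess_mul_eq_fderiv_fderiv] using this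

end Hessian

theorem abs_le_mul_pow_succ_of_abs_deriv_le {F F' : ℝ → ℝ} {a C : ℝ} {k : ℕ} (h0 : F 0 = 0)
    (hF : ∀ u ∈ Icc 0 a, HasDerivAt F (F' u) u) (hF' : ∀ u ∈ Ico 0 a, |F' u| ≤ C * u ^ k) :
    ∀ u ∈ Icc 0 a, |F u| ≤ C / (k + 1) * u ^ (k + 1) :=
  image_norm_le_of_norm_deriv_right_le_deriv_boundary
    (fun u hu => (hF u hu).continuousAt.continuousWithinAt)
    (fun u hu => (hF u (Ico_subset_Icc_self hu)).hasDerivWithinAt) (by simp [h0])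
    (fun u => ((hasDerivAt_pow (k + 1) u).const_mul _).congr_deriv (by field_simp; push_cast; ring))
    hF'

theorem abs_sub_sub_sub_half_le_of_abs_deriv_sub_le {g g' g'' : ℝ → ℝ} {M : ℝ}
    (hg : ∀ u ∈ Icc (0 : ℝ) 1, HasDerivAt g (g' u) u)
    (hg' : ∀ u ∈ Icc (0 : ℝ) 1, HasDerivAt g' (g'' u) u)
    (hg'' : ∀ u ∈ Ico (0 : ℝ) 1, |g'' u - g'' 0| ≤ M * u) :
    |g 1 - g 0 - g' 0 - g'' 0 / 2| ≤ M / 6 := by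
  have h₁ := abs_le_mul_pow_succ_of_abs_deriv_le (F := fun u => g' u - g' 0 - u * g'' 0)
    (F' := fun u => g'' u - g'' 0) (by simp)
    (fun u hu => ((hg' u hu).sub_const _).sub ((hasDerivAt_id u).mul_const _) |>.congr_deriv
      (by simp))
    (k := 1) (by simpa using hg'')
  have h₂ := abs_le_mul_pow_succ_of_abs_deriv_le
    (F := fun u => g u - g 0 - u * g' 0 - u ^ 2 / 2 * g'' 0) (by simp)
    (fun u hu => (((hg u hu).sub_const _).sub ((hasDerivAt_id u).mul_const _)).sub
      (((hasDerivAt_pow 2 u).div_const 2).mul_const _) |>.congr_deriv (by simp))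
    (fun u hu => h₁ u (Ico_subset_Icc_self hu)) 1 (by simp)
  norm_num at h₂
  rw [show M / 6 = M / 2 / 3 by ring]
  convert h₂ using 2
  ring

section Taylor

variable {E : Type*} [NormedAddCommGroup E] [NormedSpace ℝ E]

noncomputable def taylorRemainder₂ (f : E → ℝ) (x d : E) : ℝ :=
  f (x + d) - f x - fderiv ℝ f x d - fderiv ℝ (fderiv ℝ f) x d d / 2

theorem abs_taylorRemainder₂_le {f : E → ℝ} {x d : E} {L : ℝ}
    (hf : ∀ u ∈ Icc (0 : ℝ) 1, ContDiffAt ℝ 2 f (x + u • d))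
    (hLip : ∀ u ∈ Icc (0 : ℝ) 1,
      ‖fderiv ℝ (fderiv ℝ f) (x + u • d) - fderiv ℝ (fderiv ℝ f) x‖ ≤ L * ‖u • d‖) :
    |taylorRemainder₂ f x d| ≤ L / 6 * ‖d‖ ^ 3 := by
  have hline (u : ℝ) : HasDerivAt (fun u : ℝ => x + u • d) d u := by
    simpa using ((hasDerivAt_id u).smul_const d).const_add x
  have hg : ∀ u ∈ Icc (0 : ℝ) 1,
      HasDerivAt (fun u => f (x + u • d)) (fderiv ℝ f (x + u • d) d) u := fun u hu =>
    ((hf u hu).differentiableAt (by norm_num)).hasFDerivAt.comp_hasDerivAt u (hline u)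
  have hg' : ∀ u ∈ Icc (0 : ℝ) 1, HasDerivAt (fun u => fderiv ℝ f (x + u • d) d)
      (fderiv ℝ (fderiv ℝ f) (x + u • d) d d) u := fun u hu => by
    have hDf := ((hf u hu).fderiv_right (m := 1) (by norm_num)).differentiableAt (by norm_num)
    have h : HasDerivAt (fun u => fderiv ℝ f (x + u • d))
        (fderiv ℝ (fderiv ℝ f) (x + u • d) d) u :=
      hDf.hasFDerivAt.comp_hasDerivAt u (hline u)
    simpa using h.clm_apply (hasDerivAt_const u d)
  have hg'' : ∀ u ∈ Ico (0 : ℝ) 1, |fderiv ℝ (fderiv ℝ f) (x + u • d) d d -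
      fderiv ℝ (fderiv ℝ f) x d d| ≤ L * ‖d‖ ^ 3 * u := fun u hu =>
    calc _ = ‖(fderiv ℝ (fderiv ℝ f) (x + u • d) - fderiv ℝ (fderiv ℝ f) x) d d‖ := by
          simp [Real.norm_eq_abs]
      _ ≤ ‖fderiv ℝ (fderiv ℝ f) (x + u • d) - fderiv ℝ (fderiv ℝ f) x‖ * ‖d‖ * ‖d‖ :=
          ContinuousLinearMap.le_opNorm₂ _ _ _
      _ ≤ L * ‖u • d‖ * ‖d‖ * ‖d‖ := by gcongr; exact hLip u (Ico_subset_Icc_self hu)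
      _ = L * ‖d‖ ^ 3 * u := by rw [norm_smul, Real.norm_of_nonneg hu.1]; ring
  have := abs_sub_sub_sub_half_le_of_abs_deriv_sub_le hg hg' (by simpa using hg'')
  simpa [taylorRemainder₂, mul_div_right_comm] using this

theorem IsSymmSndFDerivAt.second_difference_eq_taylorRemainder₂ {f : E → ℝ} {x : E}
    (hf : IsSymmSndFDerivAt ℝ f x) (s t : E) :
    f (x + s + t) - f (x + s) - f (x + t) + f x - fderiv ℝ (fderiv ℝ f) x s t =
      taylorRemainder₂ f x (s + t) - taylorRemainder₂ f x s - taylorRemainder₂ f x t := by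
  simp only [taylorRemainder₂, map_add, _root_.add_apply, hf t s, add_assoc]
  ring

end Taylor

/-- second-difference estimate.  If f is C³ on B(x⁰,Δ̄) with
∇²f L-Lipschitz there, and x⁰, x⁰+s, x⁰+t, x⁰+s+t ∈ B(x⁰,Δ̄), then
|f(x⁰+s+t) − f(x⁰+s) − f(x⁰+t) + f(x⁰) − sᵀ∇²f(x⁰)t|
  ≤ (L/6)((‖s‖+‖t‖)³ + ‖s‖³ + ‖t‖³). -/
theorem second_difference_estimate {n : ℕ}
    (f : EuclideanSpace ℝ (Fin n) → ℝ) (x0 s t : EuclideanSpace ℝ (Fin n))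
    (Δbar L : ℝ)
    (hf : ContDiffOn ℝ 3 f (ball x0 Δbar))
    (hLip : ∀ y ∈ ball x0 Δbar, ∀ z ∈ ball x0 Δbar,
      opNorm (hess f y - hess f z) ≤ L * ‖y - z‖)
    (hs : x0 + s ∈ ball x0 Δbar) (ht : x0 + t ∈ ball x0 Δbar)
    (hst : x0 + s + t ∈ ball x0 Δbar) :
    |f (x0 + s + t) - f (x0 + s) - f (x0 + t) + f x0
        - ∑ i, ∑ j, s i * hess f x0 i j * t j|
      ≤ L / 6 * ((‖s‖ + ‖t‖) ^ 3 + ‖s‖ ^ 3 + ‖t‖ ^ 3) := by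
  have hx0 : x0 ∈ ball x0 Δbar := mem_ball_self (pos_of_mem_ball hs)
  have hR (d) (hd : x0 + d ∈ ball x0 Δbar) : |taylorRemainder₂ f x0 d| ≤ L / 6 * ‖d‖ ^ 3 := by
    have hseg (u) (hu : u ∈ Icc (0 : ℝ) 1) : x0 + u • d ∈ ball x0 Δbar :=
      (convex_ball x0 Δbar).add_smul_mem hx0 hd hu
    refine abs_taylorRemainder₂_le
      (fun u hu => (hf.contDiffAt (isOpen_ball.mem_nhds (hseg u hu))).of_le (by norm_num))
      fun u hu => ?_
    simpa using (norm_fderiv_fderiv_sub_le_opNorm_hess_sub f _ _).trans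
      (hLip _ (hseg u hu) x0 hx0)
  have hL (d) (hd : x0 + d ∈ ball x0 Δbar) : 0 ≤ L * ‖d‖ := by
    simpa using (norm_nonneg _).trans (hLip _ hd x0 hx0)
  have hcube : L * ‖s + t‖ ^ 3 ≤ L * (‖s‖ + ‖t‖) ^ 3 := by
    rcases (add_nonneg (norm_nonneg s) (norm_nonneg t)).eq_or_lt with h0 | h0
    · rw [le_antisymm (h0 ▸ norm_add_le s t) (norm_nonneg _), ← h0]
    · have := nonneg_of_mul_nonneg_left (mul_add L _ _ ▸ add_nonneg (hL s hs) (hL t ht)) h0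
      gcongr
      exact norm_add_le s t
  have hsymm : IsSymmSndFDerivAt ℝ f x0 :=
    (hf.contDiffAt (isOpen_ball.mem_nhds hx0)).isSymmSndFDerivAt (by norm_num)
  rw [sum_mul_hess_mul_eq_fderiv_fderiv, hsymm.second_difference_eq_taylorRemainder₂]
  calc _ ≤ |taylorRemainder₂ f x0 (s + t)| + |taylorRemainder₂ f x0 s|
          + |taylorRemainder₂ f x0 t| :=
        (abs_sub _ _).trans (add_le_add_left (abs_sub _ _) _)
    _ ≤ _ := by linarith [hR (s + t) (by rwa [← add_assoc]), hR s hs, hR t ht]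
end

section
/- If f : ℝⁿ → ℝ is a quadratic function f(x) = α₀ + αᵀx + ½xᵀHx with H symmetric, and S ∈ ℝ^{n×m}, T ∈ ℝ^{n×k} have full row rank n, then the nested-set Hessian is exact: ∇²_s f(x⁰;S,T) = H = ∇²f(x⁰) for every x⁰ ∈ ℝⁿ. -/
/-!
For a quadratic `f` with symmetric `H`, the increment `z ↦ f (z + u) - f z` is affine with
gradient `H u`, and a difference of simplex gradients at `y + u` and `y` is the simplex gradient
of this increment at `y`. Generalized simplex gradients are exact on affine functions, since for
`T` of full row rank `(T Tᵀ)⁻¹ T Tᵀ = 1`. Hence the matrix of simplex-gradient differences is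
`Sᵀ H`, and the same identity for `S` returns `H`. The Hessian claim is the fact that the second
derivative of `x ↦ c + ℓ x + B x x` is `B + B.flip`.
-/

open Matrix Metric

/-- The generalized simplex gradient ∇_s f(y;T) = (Tᵀ)† δ_f(y;T); since T has
full row rank, (Tᵀ)† = (T Tᵀ)⁻¹ T. -/
noncomputable def simplexGrad {n k : ℕ} (f : EuclideanSpace ℝ (Fin n) → ℝ)
    (t : Fin k → EuclideanSpace ℝ (Fin n)) (T : Matrix (Fin n) (Fin k) ℝ)
    (y : EuclideanSpace ℝ (Fin n)) : Fin n → ℝ :=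
  ((T * Tᵀ)⁻¹ * T).mulVec fun j => f (y + t j) - f y

/-- The nested-set Hessian ∇²_s f(x⁰;S,T) = (Sᵀ)† δ_{∇_s f}(x⁰;S,T); since S
has full row rank, (Sᵀ)† = (S Sᵀ)⁻¹ S.  The i-th row of δ_{∇_s f} is
(∇_s f(x⁰+sⁱ;T) − ∇_s f(x⁰;T))ᵀ. -/
noncomputable def nestedSetHessian {n m k : ℕ} (f : EuclideanSpace ℝ (Fin n) → ℝ)
    (s : Fin m → EuclideanSpace ℝ (Fin n)) (S : Matrix (Fin n) (Fin m) ℝ)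
    (t : Fin k → EuclideanSpace ℝ (Fin n)) (T : Matrix (Fin n) (Fin k) ℝ)
    (x0 : EuclideanSpace ℝ (Fin n)) : Matrix (Fin n) (Fin n) ℝ :=
  ((S * Sᵀ)⁻¹ * S) *
    Matrix.of fun i j => simplexGrad f t T (x0 + s i) j - simplexGrad f t T x0 j

namespace Matrix

variable {R ι κ : Type*} [Field R] [LinearOrder R] [IsStrictOrderedRing R]
  [Fintype ι] [DecidableEq ι] [Fintype κ]

theorem isUnit_mul_transpose_of_rank_eq (A : Matrix ι κ R) (hA : A.rank = Fintype.card ι) :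
    IsUnit (A * Aᵀ) := by
  rw [← mulVec_surjective_iff_isUnit]
  change Function.Surjective (A * Aᵀ).mulVecLin
  rw [← LinearMap.range_eq_top]
  apply Submodule.eq_top_of_finrank_eq
  rw [Module.finrank_fintype_fun_eq_card, ← hA, ← rank_self_mul_transpose, rank]

theorem mul_transpose_inv_mul_mul_transpose_mul {ι' : Type*} (A : Matrix ι κ R)
    (hA : A.rank = Fintype.card ι) (B : Matrix ι ι' R) :
    (A * Aᵀ)⁻¹ * A * (Aᵀ * B) = B := by
  rw [Matrix.mul_assoc, ← Matrix.mul_assoc A, nonsing_inv_mul_cancel_left]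
  exact (isUnit_iff_isUnit_det _).mp (isUnit_mul_transpose_of_rank_eq A hA)

theorem mul_transpose_inv_mul_mulVec_transpose_mulVec (A : Matrix ι κ R)
    (hA : A.rank = Fintype.card ι) (c : ι → R) :
    ((A * Aᵀ)⁻¹ * A) *ᵥ (Aᵀ *ᵥ c) = c := by
  rw [mulVec_mulVec, Matrix.mul_assoc, nonsing_inv_mul _
    ((isUnit_iff_isUnit_det _).mp (isUnit_mul_transpose_of_rank_eq A hA)), one_mulVec]

end Matrix

section SimplexGradient

variable {n k : ℕ}

theorem simplexGrad_add_sub_simplexGrad (f : EuclideanSpace ℝ (Fin n) → ℝ)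
    (t : Fin k → EuclideanSpace ℝ (Fin n)) (T : Matrix (Fin n) (Fin k) ℝ)
    (y u : EuclideanSpace ℝ (Fin n)) :
    simplexGrad f t T (y + u) - simplexGrad f t T y =
      simplexGrad (fun z => f (z + u) - f z) t T y := by
  rw [simplexGrad, simplexGrad, simplexGrad, ← mulVec_sub]
  congr 1
  ext j
  simp only [Pi.sub_apply, add_right_comm y u]
  ring

theorem simplexGrad_eq_of_affine {f : EuclideanSpace ℝ (Fin n) → ℝ} {b : ℝ}
    {c : Fin n → ℝ} (hf : ∀ z, f z = b + c ⬝ᵥ z.ofLp)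
    {t : Fin k → EuclideanSpace ℝ (Fin n)} {T : Matrix (Fin n) (Fin k) ℝ}
    (hT : T = of fun i j => t j i) (hTrank : T.rank = n)
    (y : EuclideanSpace ℝ (Fin n)) :
    simplexGrad f t T y = c := by
  have hdiff : (fun j => f (y + t j) - f y) = Tᵀ *ᵥ c := by
    ext j
    simp [hf, hT, mulVec, dotProduct_comm c]
  rw [simplexGrad, hdiff,
    mul_transpose_inv_mul_mulVec_transpose_mulVec T (by simpa using hTrank)]

theorem nestedSetHessian_eq_of_simplexGrad_sub {m : ℕ} {f : EuclideanSpace ℝ (Fin n) → ℝ}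
    {s : Fin m → EuclideanSpace ℝ (Fin n)} {S : Matrix (Fin n) (Fin m) ℝ}
    (hS : S = of fun i j => s j i) (hSrank : S.rank = n)
    {t : Fin k → EuclideanSpace ℝ (Fin n)} {T : Matrix (Fin n) (Fin k) ℝ}
    {x0 : EuclideanSpace ℝ (Fin n)} {H : Matrix (Fin n) (Fin n) ℝ}
    (hgrad : ∀ i, simplexGrad f t T (x0 + s i) - simplexGrad f t T x0 = (s i).ofLp ᵥ* H) :
    nestedSetHessian f s S t T x0 = H := by
  have hrows : (of fun i j => simplexGrad f t T (x0 + s i) j - simplexGrad f t T x0 j) =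
      Sᵀ * H := by
    ext i j
    simp [← Pi.sub_apply, hgrad, hS, vecMul, dotProduct, mul_apply]
  rw [nestedSetHessian, hrows,
    mul_transpose_inv_mul_mul_transpose_mul S (by simpa using hSrank)]

end SimplexGradient

theorem add_sub_eq_of_quadratic {n : ℕ} {f : EuclideanSpace ℝ (Fin n) → ℝ} {c : ℝ}
    {a : Fin n → ℝ} {H : Matrix (Fin n) (Fin n) ℝ} (hH : H.IsSymm)
    (hf : ∀ x, f x = c + a ⬝ᵥ x.ofLp + 1 / 2 * (x.ofLp ⬝ᵥ H *ᵥ x.ofLp))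
    (u z : EuclideanSpace ℝ (Fin n)) :
    f (z + u) - f z = (f u - c) + (u.ofLp ᵥ* H) ⬝ᵥ z.ofLp := by
  have hsymm : u.ofLp ᵥ* H = H *ᵥ u.ofLp := by rw [← mulVec_transpose, hH.eq]
  have hleft : u.ofLp ⬝ᵥ H *ᵥ z.ofLp = (u.ofLp ᵥ* H) ⬝ᵥ z.ofLp := dotProduct_mulVec ..
  have hright : z.ofLp ⬝ᵥ H *ᵥ u.ofLp = (u.ofLp ᵥ* H) ⬝ᵥ z.ofLp := by
    rw [hsymm, dotProduct_comm]
  simp only [hf, WithLp.ofLp_add, add_dotProduct, dotProduct_add, mulVec_add, hleft, hright]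
  ring

theorem iteratedFDeriv_two_apply_of_quadratic {𝕜 E F : Type*} [NontriviallyNormedField 𝕜]
    [NormedAddCommGroup E] [NormedSpace 𝕜 E] [NormedAddCommGroup F] [NormedSpace 𝕜 F]
    {f : E → F} {c : F} {ℓ : E →L[𝕜] F} {B : E →L[𝕜] E →L[𝕜] F}
    (hf : ∀ x, f x = c + ℓ x + B x x) (x u v : E) :
    iteratedFDeriv 𝕜 2 f x ![u, v] = B u v + B v u := by
  obtain rfl : f = fun x => c + ℓ x + B x x := funext hf
  have hfderiv :
      fderiv 𝕜 (fun x => c + ℓ x + B x x) = fun x => ℓ + (B x + B.flip x) := by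
    funext x
    refine HasFDerivAt.fderiv ?_
    refine (((hasFDerivAt_const c x).add ℓ.hasFDerivAt).add
      (B.hasFDerivAt_of_bilinear (hasFDerivAt_id x) (hasFDerivAt_id x))).congr_fderiv ?_
    ext w
    simp
  have hfderiv2 : HasFDerivAt (fun x => ℓ + (B x + B.flip x)) (B + B.flip) x :=
    ((hasFDerivAt_const ℓ x).add (B.hasFDerivAt.add B.flip.hasFDerivAt)).congr_fderiv
      (zero_add _)
  rw [iteratedFDeriv_two_apply, hfderiv, hfderiv2.fderiv]
  simp

theorem hess_eq_of_quadratic {n : ℕ} {f : EuclideanSpace ℝ (Fin n) → ℝ} {c : ℝ}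
    {a : Fin n → ℝ} {H : Matrix (Fin n) (Fin n) ℝ} (hH : H.IsSymm)
    (hf : ∀ x, f x = c + a ⬝ᵥ x.ofLp + 1 / 2 * (x.ofLp ⬝ᵥ H *ᵥ x.ofLp))
    (x : EuclideanSpace ℝ (Fin n)) :
    hess f x = H := by
  set A := Matrix.toEuclideanCLM (𝕜 := ℝ) H
  have hbilin : ∀ x, f x = c + innerSL ℝ (WithLp.toLp 2 a) x
      + ((1 / 2 : ℝ) • (innerSL ℝ).comp A) x x := by
    intro x
    simp [hf, A, EuclideanSpace.inner_eq_star_dotProduct, dotProduct_comm a]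
  ext i j
  rw [hess, of_apply, iteratedFDeriv_two_apply_of_quadratic hbilin]
  simpa [A, EuclideanSpace.inner_eq_star_dotProduct, hH.apply i j, div_eq_inv_mul] using
    add_halves (H i j)

/-- if f is a quadratic function with symmetric Hessian matrix H
and S, T have full row rank, then the nested-set Hessian is exact:
∇²_s f(x⁰;S,T) = H = ∇²f(x⁰) for every x⁰. -/
theorem nested_set_hessian_exact_for_quadratics {n m k : ℕ}
    (a0 : ℝ) (a : Fin n → ℝ) (H : Matrix (Fin n) (Fin n) ℝ) (hH : H.IsSymm)
    (f : EuclideanSpace ℝ (Fin n) → ℝ)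
    (hf : ∀ x, f x = a0 + (∑ i, a i * x i)
      + (1 / 2) * ∑ i, ∑ j, x i * H i j * x j)
    (s : Fin m → EuclideanSpace ℝ (Fin n)) (S : Matrix (Fin n) (Fin m) ℝ)
    (hSdef : S = Matrix.of fun i j => s j i) (hSrank : S.rank = n)
    (t : Fin k → EuclideanSpace ℝ (Fin n)) (T : Matrix (Fin n) (Fin k) ℝ)
    (hTdef : T = Matrix.of fun i j => t j i) (hTrank : T.rank = n)
    (x0 : EuclideanSpace ℝ (Fin n)) :
    nestedSetHessian f s S t T x0 = H ∧ hess f x0 = H := by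
  have hquad : ∀ x, f x = a0 + a ⬝ᵥ x.ofLp + 1 / 2 * (x.ofLp ⬝ᵥ H *ᵥ x.ofLp) := by
    intro x
    simp only [hf, dotProduct, mulVec, Finset.mul_sum, mul_assoc]
  refine ⟨nestedSetHessian_eq_of_simplexGrad_sub hSdef hSrank fun i => ?_,
    hess_eq_of_quadratic hH hquad x0⟩
  rw [simplexGrad_add_sub_simplexGrad]
  exact simplexGrad_eq_of_affine (add_sub_eq_of_quadratic hH hquad (s i)) hTdef hTrank x0
end

section
/- Let S ∈ ℝ^{n×n} be invertible, x⁰ ∈ ℝⁿ, and let f be any function defined at the points of 𝒮(x⁰;S,U_0). Define the symmetric matrix Ĥ ∈ ℝ^{n×n} by Ĥ_{i,i} = f(x⁰+2sⁱ) − 2f(x⁰+sⁱ) + f(x⁰) and Ĥ_{i,j} = f(x⁰+sⁱ+sʲ) − f(x⁰+sⁱ) − f(x⁰+sʲ) + f(x⁰) for i ≠ j, and set H = S⁻ᵀ Ĥ S⁻¹. Then the quadratic function Q(x) = α₀ + αᵀx + ½xᵀHx, with α = S⁻ᵀᾱ where ᾱᵢ = f(x⁰+sⁱ) − f(x⁰)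 − ½Ĥ_{i,i} − (x⁰)ᵀHsⁱ, and α₀ = f(x⁰) − αᵀx⁰ − ½(x⁰)ᵀHx⁰, interpolates f at every point of {x⁰} ∪ {x⁰+sⁱ} ∪ {x⁰+2sⁱ} ∪ {x⁰+sⁱ+sʲ}_{i<j}. -/
open Matrix

/-- explicit quadratic interpolant over the minimal poised set
𝒮(x⁰;S,U₀) (U₀ = S).  With Ĥ built from second differences of f,
H = S⁻ᵀ Ĥ S⁻¹, α = S⁻ᵀ ᾱ, and α₀ as stated, the quadratic
Q(x) = α₀ + αᵀx + ½xᵀHx interpolates f at every point of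
{x⁰} ∪ {x⁰+sⁱ} ∪ {x⁰+2sⁱ} ∪ {x⁰+sⁱ+sʲ}_{i<j}. -/
theorem quadratic_interpolant_over_U0 {n : ℕ}
    (S : Matrix (Fin n) (Fin n) ℝ) (hS : IsUnit S.det)
    (x0 : Fin n → ℝ) (f : (Fin n → ℝ) → ℝ)
    (s : Fin n → (Fin n → ℝ)) (hs : ∀ i r, s i r = S r i)
    (Hhat : Matrix (Fin n) (Fin n) ℝ)
    (hHhat : Hhat = Matrix.of fun i j =>
      if i = j then f (x0 + s i + s i) - 2 * f (x0 + s i) + f x0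
      else f (x0 + s i + s j) - f (x0 + s i) - f (x0 + s j) + f x0)
    (H : Matrix (Fin n) (Fin n) ℝ) (hH : H = (Sᵀ)⁻¹ * Hhat * S⁻¹)
    (abar : Fin n → ℝ)
    (habar : ∀ i, abar i
      = f (x0 + s i) - f x0 - (1 / 2) * Hhat i i - x0 ⬝ᵥ H.mulVec (s i))
    (a : Fin n → ℝ) (ha : a = (Sᵀ)⁻¹.mulVec abar)
    (a0 : ℝ) (ha0 : a0 = f x0 - a ⬝ᵥ x0 - (1 / 2) * (x0 ⬝ᵥ H.mulVec x0))
    (Q : (Fin n → ℝ) → ℝ)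
    (hQ : ∀ x, Q x = a0 + a ⬝ᵥ x + (1 / 2) * (x ⬝ᵥ H.mulVec x)) :
    Q x0 = f x0
    ∧ (∀ i, Q (x0 + s i) = f (x0 + s i))
    ∧ (∀ i, Q (x0 + s i + s i) = f (x0 + s i + s i))
    ∧ (∀ i j, i < j → Q (x0 + s i + s j) = f (x0 + s i + s j)) := by
  -- basic matrix facts
  have hSinv : S⁻¹ * S = 1 := nonsing_inv_mul S hS
  have hcol : ∀ i, S⁻¹.mulVec (s i) = Pi.single i 1 := by
    intro i
    have hsfun : s i = fun r => S r i := funext (hs i)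
    funext r
    have h1 : (S⁻¹ * S) r i = (1 : Matrix (Fin n) (Fin n) ℝ) r i := by rw [hSinv]
    rw [Matrix.mul_apply] at h1
    simp only [hsfun, Matrix.mulVec, dotProduct]
    rw [h1, Matrix.one_apply, Pi.single_apply]
  -- vecMul version
  have hrow : ∀ i, Matrix.vecMul (s i) (Sᵀ)⁻¹ = Pi.single i 1 := by
    intro i
    rw [← Matrix.transpose_nonsing_inv, Matrix.vecMul_transpose, hcol]
  -- Hhat symmetric
  have hHhatsym : ∀ i j, Hhat i j = Hhat j i := by
    intro i j
    by_cases h : i = j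
    · rw [h]
    · simp only [hHhat, Matrix.of_apply, if_neg h, if_neg (Ne.symm h)]
      rw [add_right_comm x0 (s i) (s j)]
      ring
  -- bilinear form values on columns
  have hBs : ∀ i j, s j ⬝ᵥ H.mulVec (s i) = Hhat j i := by
    intro i j
    rw [hH, ← Matrix.mulVec_mulVec, hcol, ← Matrix.mulVec_mulVec,
      Matrix.dotProduct_mulVec, hrow]
    have h2 : Hhat.mulVec (Pi.single i 1) = fun k => Hhat k i := by
      funext k
      simp [Matrix.mulVec_single]
    rw [h2]
    simp
  -- symmetry of H
  have hHsym : ∀ x y, x ⬝ᵥ H.mulVec y = y ⬝ᵥ H.mulVec x := by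
    intro x y
    have hHt : Hᵀ = H := by
      have h3 : Hhatᵀ = Hhat := by
        funext i j; exact hHhatsym j i
      rw [hH, Matrix.transpose_mul, Matrix.transpose_mul,
        Matrix.transpose_nonsing_inv, Matrix.transpose_nonsing_inv,
        Matrix.transpose_transpose, h3, Matrix.mul_assoc]
    rw [Matrix.dotProduct_mulVec, dotProduct_comm, ← Matrix.mulVec_transpose, hHt]
  -- a ⬝ᵥ s i = abar i
  have has : ∀ i, a ⬝ᵥ s i = abar i := by
    intro i
    rw [ha, dotProduct_comm, Matrix.dotProduct_mulVec, hrow]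
    simp
  have hdiag : ∀ i, Hhat i i = f (x0 + s i + s i) - 2 * f (x0 + s i) + f x0 := by
    intro i; rw [hHhat]; simp
  refine ⟨?_, ?_, ?_, ?_⟩
  · rw [hQ, ha0]; ring
  · intro i
    rw [hQ, ha0]
    simp only [Matrix.mulVec_add, dotProduct_add, add_dotProduct]
    rw [hHsym (s i) x0]
    simp only [has, hBs]
    rw [habar i, hdiag i]
    ring
  · intro i
    rw [hQ, ha0]
    simp only [Matrix.mulVec_add, dotProduct_add, add_dotProduct]
    rw [hHsym (s i) x0]
    simp only [has, hBs, ← add_assoc]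
    rw [habar i, hdiag i]
    ring
  · intro i j hij
    have hij' : i ≠ j := ne_of_lt hij
    have hoff : Hhat i j = f (x0 + s i + s j) - f (x0 + s i) - f (x0 + s j) + f x0 := by
      rw [hHhat]; simp [hij']
    rw [hQ, ha0]
    simp only [Matrix.mulVec_add, dotProduct_add, add_dotProduct]
    rw [hHsym (s i) x0, hHsym (s j) x0]
    simp only [has, hBs, ← add_assoc]
    rw [habar i, habar j, hHhatsym j i, hoff]
    ring
end
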